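/- arXiv:math/0405452 — 3 statements merged into one kernel-verified Lean document; each statement's English description precedes it below -/
import Mathlib

section
/- Let A be a k×k matrix with all entries finite whose critical graph has exactly one node. Then there exist a neighborhood V of A (for the supremum norm on ℝ^{k×k}) and an integer n such that for every n-tuple of matrices (A_1, …, A_n) ∈ V^n, the max-plus product A_1 ⊗ ⋯ ⊗ A_n has rank 1. -/
open scoped BigOperators
open MeasureTheory

noncomputable section

/-- The max-plus semiring carrier `ℝ_max = ℝ ∪ {-∞}`, where `⊕ = max` (the lattice `sup`)
and `⊗ = +` (the additive structure of `WithBot ℝ`, for which `⊥` is absorbing). -/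
abbrev Rmax : Type := WithBot ℝ

/-- The order topology on `ℝ_max`; it coincides with the topology of the metric
`d(x,y) = |arctan x - arctan y|` (with `arctan (-∞) = -π/2`). -/
instance : TopologicalSpace Rmax := Preorder.topology Rmax

instance : MeasurableSpace Rmax := borel Rmax

/-- `k × k` matrices with entries in `ℝ_max`. -/
abbrev MPMat (k : ℕ) : Type := Fin k → Fin k → Rmax

namespace MaxPlus

variable {k : ℕ}

/-- Max-plus matrix product: `(A ⊗ B) i j = max_l (A i l + B l j)`. -/
def mpMul (A B : MPMat k) : MPMat k :=
  fun i j => Finset.univ.sup fun l => A i l + B l j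

/-- The max-plus identity matrix. -/
def mpId (k : ℕ) : MPMat k := fun i j => if i = j then (0 : Rmax) else ⊥

/-- Max-plus power `A^{⊗n}` (with the convention `A^{⊗0} = Id`). -/
def mpPow (A : MPMat k) : ℕ → MPMat k
  | 0 => mpId k
  | n + 1 => mpMul (mpPow A n) A

/-- Max-plus product of a list of matrices (in the order of the list). -/
def mpListProd : List (MPMat k) → MPMat k
  | [] => mpId k
  | A :: L => mpMul A (mpListProd L)

/-- The backward product `X N ⊗ ⋯ ⊗ X 1`. -/
def mpProd (X : ℕ → MPMat k) : ℕ → MPMat k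
  | 0 => mpId k
  | n + 1 => mpMul (X (n + 1)) (mpProd X n)

/-- `A` has max-plus rank one: `A i j = a i + b j` for vectors `a`, `b`,
neither identically `-∞`. -/
def IsRankOne (A : MPMat k) : Prop :=
  ∃ a b : Fin k → Rmax, (∃ i, a i ≠ ⊥) ∧ (∃ j, b j ≠ ⊥) ∧ ∀ i j, A i j = a i + b j

/-- `A ∈ M_k`: no row of `-∞`. -/
def MemMk (A : MPMat k) : Prop := ∀ i, ∃ j, A i j ≠ ⊥

/-- `A ∈ P_k` (primitive): some max-plus power of `A` has all entries finite. -/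
def MemPk (A : MPMat k) : Prop :=
  MemMk A ∧ ∃ n : ℕ, 0 < n ∧ ∀ i j, mpPow A n i j ≠ ⊥

/-- Weight of the path `(p 0, p 1, …, p n)` with respect to `A`. -/
def pathWeight (A : MPMat k) (n : ℕ) (p : ℕ → Fin k) : Rmax :=
  ∑ l ∈ Finset.range n, A (p l) (p (l + 1))

/-- Average weight of a circuit of length `n`. -/
def circAw (A : MPMat k) (n : ℕ) (p : ℕ → Fin k) : Rmax :=
  (pathWeight A n p).map fun x => x / (n : ℝ)

/-- Max-plus spectral radius: the maximum of the average weights of the circuits of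
length at most `k` (equivalently, of the elementary circuits) of `G(A)`. -/
def mpRho (A : MPMat k) : Rmax :=
  Finset.univ.sup fun c : Σ n : Fin k, Fin (n.1 + 1) → Fin k =>
    circAw A (c.1.1 + 1) fun l => c.2 ⟨l % (c.1.1 + 1), Nat.mod_lt _ (Nat.succ_pos _)⟩

/-- The arc `(i,j)` belongs to the critical graph `G^c(A)`: it lies on a circuit of
`G(A)` whose average weight is `ρ_max(A)`. -/
def IsCritArc (A : MPMat k) (i j : Fin k) : Prop :=
  ∃ (n : ℕ) (p : ℕ → Fin k), 0 < n ∧ p n = p 0 ∧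
    pathWeight A n p ≠ ⊥ ∧ circAw A n p = mpRho A ∧
    ∃ l < n, p l = i ∧ p (l + 1) = j

/-- The node `i` belongs to the critical graph `G^c(A)`. -/
def IsCritNode (A : MPMat k) (i : Fin k) : Prop := ∃ j, IsCritArc A i j

/-- `j` can be reached from `i` by a path in the critical graph. -/
def CritConnected (A : MPMat k) (i j : Fin k) : Prop :=
  ∃ (n : ℕ) (p : ℕ → Fin k), p 0 = i ∧ p n = j ∧
    ∀ l < n, IsCritArc A (p l) (p (l + 1))

/-- The critical graph `G^c(A)` is nonempty and has exactly one strongly connected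
component. -/
def CritSCS1 (A : MPMat k) : Prop :=
  (∃ i, IsCritNode A i) ∧ ∀ i j, IsCritNode A i → IsCritNode A j → CritConnected A i j

/-- The critical graph contains a circuit of length `n`. -/
def HasCritCircuitLen (A : MPMat k) (n : ℕ) : Prop :=
  0 < n ∧ ∃ p : ℕ → Fin k, p n = p 0 ∧ ∀ l < n, IsCritArc A (p l) (p (l + 1))

/-- The cyclicity of the critical graph is `1`: the gcd of the lengths of its circuits
is `1` (equivalently, finitely many of these lengths have gcd `1`). -/
def CritCyc1 (A : MPMat k) : Prop :=
  ∃ S : Finset ℕ, S.Nonempty ∧ (∀ m ∈ S, HasCritCircuitLen A m) ∧ S.gcd id = 1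

/-- `A` is of type scs1-cyc1. -/
def IsScs1Cyc1 (A : MPMat k) : Prop := CritSCS1 A ∧ CritCyc1 A

/-- The cyclicity `c(A)` of the critical graph: the gcd of the lengths of its circuits. -/
def critCyclicity (A : MPMat k) : ℕ :=
  sInf {d : ℕ | 0 < d ∧ (∀ n, HasCritCircuitLen A n → d ∣ n) ∧
    ∀ e : ℕ, (∀ n, HasCritCircuitLen A n → e ∣ n) → e ∣ d}

/-- A real matrix, seen as a matrix with entries in `ℝ_max`. -/
def toMP (A : Fin k → Fin k → ℝ) : MPMat k := fun i j => (A i j : Rmax)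

open Classical in
/-- Value at `V` of the linear form on `ℝ_max^{k×k}` with (real) coefficients `α`:
the usual linear combination of the entries with nonzero coefficients if these are all
finite, and `-∞` otherwise. -/
def evalForm (α : Fin k → Fin k → ℝ) (V : MPMat k) : Rmax :=
  if ∀ i j, α i j ≠ 0 → V i j ≠ ⊥ then
    (((∑ i, ∑ j, if α i j = 0 then (0 : ℝ) else α i j * (V i j).unbotD 0) : ℝ) : Rmax)
  else ⊥

open Classical in
/-- Value at `(V, W)` of the linear form on `ℝ_max^{k×k} × ℝ_max^{k×k}` with
coefficients `(α, β)`. -/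
def evalForm2 (α β : Fin k → Fin k → ℝ) (V W : MPMat k) : Rmax :=
  if (∀ i j, α i j ≠ 0 → V i j ≠ ⊥) ∧ (∀ i j, β i j ≠ 0 → W i j ≠ ⊥) then
    ((((∑ i, ∑ j, if α i j = 0 then (0 : ℝ) else α i j * (V i j).unbotD 0) +
        (∑ i, ∑ j, if β i j = 0 then (0 : ℝ) else β i j * (W i j).unbotD 0)) : ℝ) : Rmax)
  else ⊥

open Classical in
/-- Coefficient matrix of the linear form `w(·, pth)` (weight of the path
`(p 0, …, p n)`): the coefficient of the entry `(i,j)` is the number of times the path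
uses the arc `(i,j)`. -/
def pathCoeff (n : ℕ) (p : ℕ → Fin k) : Fin k → Fin k → ℝ := fun i j =>
  (((Finset.range n).filter fun l => p l = i ∧ p (l + 1) = j).card : ℝ)

/-- Coefficient matrix of the linear form `aw(·, c)` (average weight of the circuit
`(p 0, …, p n = p 0)`). -/
def circCoeff (n : ℕ) (p : ℕ → Fin k) : Fin k → Fin k → ℝ := fun i j =>
  pathCoeff n p i j / (n : ℝ)

/-- `(p 0, …, p n)` is an elementary path. -/
def IsElemPath (n : ℕ) (p : ℕ → Fin k) : Prop :=
  ∀ l m, l ≤ n → m ≤ n → p l = p m → l = m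

/-- `(p 0, …, p n = p 0)` is an elementary circuit. -/
def IsElemCircuit (n : ℕ) (p : ℕ → Fin k) : Prop :=
  0 < n ∧ p n = p 0 ∧ ∀ l m, l < n → m < n → p l = p m → l = m

/-- The set of arcs of a circuit, i.e. the circuit seen as a directed graph. -/
def circArcSet (n : ℕ) (p : ℕ → Fin k) : Set (Fin k × Fin k) :=
  {a | ∃ l < n, p l = a.1 ∧ p (l + 1) = a.2}

/-- No linear form of the family `E₁` vanishes at `A`. -/
def NoE1Vanishes (A : MPMat k) : Prop :=
  ∀ (n₁ n₂ : ℕ) (p₁ p₂ : ℕ → Fin k), IsElemCircuit n₁ p₁ → IsElemCircuit n₂ p₂ →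
    circArcSet n₁ p₁ ≠ circArcSet n₂ p₂ →
    evalForm (fun i j => circCoeff n₁ p₁ i j - circCoeff n₂ p₂ i j) A ≠ 0

/-- No linear form of the family `E₂` vanishes at `A`. -/
def NoE2Vanishes (A : MPMat k) : Prop :=
  ∀ (i κ : Fin k) (n₁ n₂ nc : ℕ) (p₁ p₂ pc : ℕ → Fin k),
    i ≠ κ → IsElemPath n₁ p₁ → IsElemPath n₂ p₂ →
    p₁ 0 = i → p₂ 0 = i → p₁ n₁ = κ → p₂ n₂ = κ →
    IsElemCircuit nc pc → (∃ l < nc, pc l = κ) →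
    ¬(n₁ = n₂ ∧ ∀ l ≤ n₁, p₁ l = p₂ l) →
    evalForm (fun a b => pathCoeff n₁ p₁ a b - (n₁ : ℝ) * circCoeff nc pc a b
      - pathCoeff n₂ p₂ a b + (n₂ : ℝ) * circCoeff nc pc a b) A ≠ 0

open Classical in
/-- No linear form of the family `E₃` vanishes at `(A, B)`. -/
def NoE3Vanishes (A B : MPMat k) : Prop :=
  ∀ (i₁ i₂ j₁ j₂ m₁ m₂ κ : Fin k) (nc n₁ n₂ q₁ q₂ r₁ r₂ : ℕ)
    (pc pi₁ pi₂ pm₁ pm₂ pj₁ pj₂ : ℕ → Fin k),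
    m₁ ≠ m₂ →
    IsElemCircuit nc pc → (∃ l < nc, pc l = κ) →
    IsElemPath n₁ pi₁ → pi₁ 0 = i₁ → pi₁ n₁ = κ →
    IsElemPath n₂ pi₂ → pi₂ 0 = i₂ → pi₂ n₂ = κ →
    IsElemPath q₁ pm₁ → pm₁ 0 = m₁ → pm₁ q₁ = κ →
    IsElemPath q₂ pm₂ → pm₂ 0 = m₂ → pm₂ q₂ = κ →
    pj₁ 0 = i₁ → pj₁ r₁ = j₁ → r₁ ≤ 2 * k * nc →
    pj₂ 0 = i₂ → pj₂ r₂ = j₂ → r₂ ≤ 2 * k * nc →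
    evalForm2
      (fun a b => pathCoeff r₁ pj₁ a b - pathCoeff n₁ pi₁ a b + pathCoeff q₁ pm₁ a b
        - pathCoeff r₂ pj₂ a b + pathCoeff n₂ pi₂ a b - pathCoeff q₂ pm₂ a b
        - ((r₁ : ℝ) - (n₁ : ℝ) + (q₁ : ℝ) - (r₂ : ℝ) + (n₂ : ℝ) - (q₂ : ℝ))
            * circCoeff nc pc a b)
      (fun a b => (if a = j₁ ∧ b = m₁ then (1 : ℝ) else 0)
        - (if a = j₂ ∧ b = m₂ then (1 : ℝ) else 0))
      A B ≠ 0

/-- Negation on `ℝ_max` (fixing `-∞`). -/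
def negB : Rmax → Rmax := WithBot.map fun x : ℝ => -x

/-- `Ã`, the matrix `A` normalized by its max-plus spectral radius:
`Ã i j = A i j - ρ_max(A)`. -/
def tildeM (A : MPMat k) : MPMat k := fun i j => A i j + negB (mpRho A)

/-- `B⁺ = ⊕_{n=1}^{k} B^{⊗n}`. -/
def mpPlus (B : MPMat k) : MPMat k :=
  fun i j => (Finset.Icc 1 k).sup fun n => mpPow B n i j

/-- The index (in `ℕ`) of the smallest node of the critical graph of `A`; this is the
node `κ(A)`, the smallest node of the lexicographically smallest elementary circuit of
`G^c(A)`. -/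
def kappaN (A : MPMat k) : ℕ := sInf {m : ℕ | ∃ h : m < k, IsCritNode A ⟨m, h⟩}

/-- The node `κ(A)` (with a default value, used only when `Fin k` would be empty or the
critical graph trivial). -/
def kappa (A : MPMat k) (dflt : Fin k) : Fin k :=
  if h : kappaN A < k then ⟨kappaN A, h⟩ else dflt

/-- The reduced matrix `Ā` associated to `A`:
`Ā i j = Ã i j - Ã⁺ i κ(A) + Ã⁺ j κ(A)`. -/
def barM (A : MPMat k) : MPMat k := fun i j =>
  tildeM A i j + negB (mpPlus (tildeM A) i (kappa A i)) + mpPlus (tildeM A) j (kappa A i)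

/-- The matrix `B̂` associated to `A` and `B`:
`B̂ i j = B i j - Ã⁺ i κ(A) + Ã⁺ j κ(A)`. -/
def hatM (A B : MPMat k) : MPMat k := fun i j =>
  B i j + negB (mpPlus (tildeM A) i (kappa A i)) + mpPlus (tildeM A) j (kappa A i)

/-- `A` is reduced: nonpositive entries, at least one zero in each row. -/
def IsReduced (A : MPMat k) : Prop :=
  (∀ i j, A i j ≤ 0) ∧ ∀ i, ∃ j, A i j = 0

/-- `A` is strictly reduced: nonpositive entries, exactly one zero in each row. -/
def IsStrictlyReduced (A : MPMat k) : Prop :=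
  (∀ i j, A i j ≤ 0) ∧ ∀ i, ∃! j, A i j = 0

/-- The graph `G(A)` is strongly connected. -/
def GStronglyConnected (A : MPMat k) : Prop :=
  ∀ i j : Fin k, ∃ (n : ℕ) (p : ℕ → Fin k), 0 < n ∧ p 0 = i ∧ p n = j ∧
    ∀ l < n, A (p l) (p (l + 1)) ≠ ⊥

/-- `arctan`, extended by `arctan (-∞) = -π/2`. -/
def arctanB (x : Rmax) : ℝ := WithBot.recBotCoe (-(Real.pi / 2)) Real.arctan x

/-- The distance `d(A,B) = max_{i,j} |arctan (A i j) - arctan (B i j)|` on `M_k`. -/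
def mpDist (A B : MPMat k) : ℝ :=
  ⨆ a : Fin k × Fin k, |arctanB (A a.1 a.2) - arctanB (B a.1 a.2)|

/-- `A` belongs to the (topological) support of `μ`, for the distance `mpDist`. -/
def MemSupport (μ : Measure (MPMat k)) (A : MPMat k) : Prop :=
  ∀ ε : ℝ, 0 < ε → 0 < μ {B | mpDist A B < ε}

/-- `f` belongs to the support of a measure on `N`-tuples of matrices, for the product
distance. -/
def MemSupportVec {N : ℕ} (ν : Measure (Fin N → MPMat k)) (f : Fin N → MPMat k) : Prop :=
  ∀ ε : ℝ, 0 < ε → 0 < ν {g | ∀ t, mpDist (f t) (g t) < ε}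

/-- `(X n)_{n}` is a sequence of i.i.d. random matrices on `(Ω, P)`. -/
def IsIID {Ω : Type*} [MeasurableSpace Ω] (P : Measure Ω) (X : ℕ → Ω → MPMat k) : Prop :=
  (∀ n, Measurable (X n)) ∧
    ProbabilityTheory.iIndepFun X P ∧
    ∀ m n, Measure.map (X m) P = Measure.map (X n) P

/-- `(X n)_{n ≥ 1}` is a stationary sequence of random matrices on `(Ω, P)`. -/
def IsStationary {Ω : Type*} [MeasurableSpace Ω] (P : Measure Ω)
    (X : ℕ → Ω → MPMat k) : Prop :=
  ∀ m N : ℕ,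
    Measure.map (fun ω => fun t : Fin N => X (1 + m + t) ω) P
      = Measure.map (fun ω => fun t : Fin N => X (1 + t) ω) P

/-- The sequence `(X n)_{n ≥ 1}` has the memory loss property: for some `N ≥ 1`, the
product `X N ⊗ ⋯ ⊗ X 1` has rank one with positive probability. -/
def HasMLP {Ω : Type*} [MeasurableSpace Ω] (P : Measure Ω)
    (X : ℕ → Ω → MPMat k) : Prop :=
  ∃ N : ℕ, 0 < N ∧ 0 < P {ω | IsRankOne (mpProd (fun n => X n ω) N)}

end MaxPlus
namespace Stmt6Aux
open MaxPlus Finset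

variable {k : ℕ}

abbrev Mat (k : ℕ) := Fin k → Fin k → ℝ

/-- default matrix -/
def d0 (k : ℕ) : Mat k := fun _ _ => 0

/-- weight of the path `p` of length `n` w.r.t. the time-dependent matrix `B`. -/
def W (B : ℕ → Mat k) (n : ℕ) (p : ℕ → Fin k) : ℝ :=
  ∑ l ∈ Finset.range n, B l (p l) (p (l + 1))

lemma W_congr {B B' : ℕ → Mat k} {n : ℕ} {p q : ℕ → Fin k}
    (hB : ∀ l < n, B l = B' l) (hp : ∀ l ≤ n, p l = q l) :
    W B n p = W B' n q := by
  refine Finset.sum_congr rfl fun l hl => ?_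
  rw [Finset.mem_range] at hl
  rw [hB l hl, hp l hl.le, hp (l + 1) hl]

lemma W_succ (B : ℕ → Mat k) (n : ℕ) (p : ℕ → Fin k) :
    W B (n + 1) p = B 0 (p 0) (p 1) + W (fun l => B (l + 1)) n (fun l => p (l + 1)) := by
  rw [W, Finset.sum_range_succ', add_comm]; rfl

lemma W_split (B : ℕ → Mat k) {t n : ℕ} (ht : t ≤ n) (p : ℕ → Fin k) :
    W B n p = W B t p + W (fun l => B (t + l)) (n - t) (fun l => p (t + l)) := by
  rw [W, W, W, ← Finset.sum_range_add_sum_Ico _ ht, Finset.sum_Ico_eq_sum_range]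
  rfl

lemma coe_sum {α : Type*} (s : Finset α) (f : α → ℝ) :
    ((∑ x ∈ s, f x : ℝ) : Rmax) = ∑ x ∈ s, ((f x : ℝ) : Rmax) := by
  induction s using Finset.cons_induction with
  | empty => simp
  | cons a s ha ih => rw [Finset.sum_cons, Finset.sum_cons, WithBot.coe_add, ih]

/-- Lower bound for the max-plus product: any path gives a lower bound. -/
lemma le_prod (L : List (Mat k)) (p : ℕ → Fin k) :
    ((W (fun l => L.getD l (d0 k)) L.length p : ℝ) : Rmax)
      ≤ mpListProd (L.map toMP) (p 0) (p L.length) := by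
  induction L generalizing p with
  | nil =>
    simp [W, mpListProd, mpId]
  | cons C L ih =>
    have h1 : W (fun l => (C :: L).getD l (d0 k)) (L.length + 1) p
        = C (p 0) (p 1) + W (fun l => L.getD l (d0 k)) L.length (fun l => p (l + 1)) := by
      rw [W_succ]
      simp only [List.getD_cons_zero, List.getD_cons_succ]
    have h2 := ih (fun l => p (l + 1))
    calc ((W (fun l => (C :: L).getD l (d0 k)) (C :: L).length p : ℝ) : Rmax)
        = ((C (p 0) (p 1) : ℝ) : Rmax)
            + ((W (fun l => L.getD l (d0 k)) L.length (fun l => p (l + 1)) : ℝ) : Rmax) := by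
          rw [List.length_cons, h1, WithBot.coe_add]
      _ ≤ ((C (p 0) (p 1) : ℝ) : Rmax) + mpListProd (L.map toMP) (p 1) (p (L.length + 1)) := by
          exact add_le_add_right h2 _
      _ ≤ mpListProd ((C :: L).map toMP) (p 0) (p (C :: L).length) := by
          simp only [List.map_cons, mpListProd, List.length_cons]
          exact Finset.le_sup (f := fun v => toMP C (p 0) v
            + mpListProd (L.map toMP) v (p (L.length + 1))) (Finset.mem_univ (p 1))

/-- The max-plus product entry is achieved by some path. -/
lemma prod_eq (hk : 0 < k) (j : Fin k) :
    ∀ (L : List (Mat k)) (i : Fin k), (i = j ∨ L ≠ []) →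
    ∃ p : ℕ → Fin k, p 0 = i ∧ p L.length = j ∧
      mpListProd (L.map toMP) i j = ((W (fun l => L.getD l (d0 k)) L.length p : ℝ) : Rmax) := by
  intro L
  induction L with
  | nil =>
    intro i h0
    obtain rfl : i = j := h0.resolve_right (by simp)
    exact ⟨fun _ => i, rfl, rfl, by simp [mpListProd, mpId, W]⟩
  | cons C L ih =>
    intro i h0
    haveI : Nonempty (Fin k) := ⟨⟨0, hk⟩⟩
    have hprod : mpListProd ((C :: L).map toMP) i j
        = Finset.univ.sup (fun v => toMP C i v + mpListProd (L.map toMP) v j) := rfl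
    obtain ⟨v, -, hv⟩ := Finset.exists_mem_eq_sup (Finset.univ) Finset.univ_nonempty
      (fun v => toMP C i v + mpListProd (L.map toMP) v j)
    by_cases hc : v = j ∨ L ≠ []
    · obtain ⟨q, hq0, hqn, hqe⟩ := ih v hc
      refine ⟨fun m => Nat.casesOn m i q, rfl, hqn, ?_⟩
      have h1 : W (fun l => (C :: L).getD l (d0 k)) (L.length + 1) (fun m => Nat.casesOn m i q)
          = C i (q 0) + W (fun l => L.getD l (d0 k)) L.length q := by
        rw [W_succ]
        simp only [List.getD_cons_zero, List.getD_cons_succ]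
        rfl
      rw [hprod, hv, List.length_cons, h1, hq0, WithBot.coe_add]
      rw [hqe]
      rfl
    · push_neg at hc
      obtain ⟨hvj, rfl⟩ := hc
      exfalso
      have hle : toMP C i j + mpListProd (List.map toMP []) j j
          ≤ Finset.univ.sup (fun v => toMP C i v + mpListProd (List.map toMP []) v j) :=
        Finset.le_sup (f := fun v => toMP C i v + mpListProd (List.map toMP []) v j)
          (Finset.mem_univ j)
      rw [hv] at hle
      have h2 : mpListProd (List.map toMP []) v j = (⊥ : Rmax) := by
        simp [mpListProd, mpId, hvj]
      have h3 : mpListProd (List.map toMP []) j j = (0 : Rmax) := by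
        simp [mpListProd, mpId]
      rw [h2, h3, WithBot.add_bot, add_zero] at hle
      exact absurd (le_bot_iff.mp hle) (WithBot.coe_ne_bot)

end Stmt6Aux
namespace Stmt6Aux
open MaxPlus Finset

variable {k : ℕ}

lemma W_three (B : ℕ → Mat k) {a b n : ℕ} (hab : a ≤ b) (hbn : b ≤ n) (p : ℕ → Fin k) :
    W B n p = ∑ l ∈ Finset.range a, B l (p l) (p (l + 1))
      + ∑ l ∈ Finset.Ico a b, B l (p l) (p (l + 1))
      + ∑ l ∈ Finset.Ico b n, B l (p l) (p (l + 1)) := by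
  rw [W, Finset.range_eq_Ico, ← Finset.sum_Ico_consecutive _ (Nat.zero_le a) (hab.trans hbn),
    ← Finset.sum_Ico_consecutive _ hab hbn, ← Finset.range_eq_Ico, add_assoc]

lemma seg_compare (B : ℕ → Mat k) {n a b : ℕ} (p q : ℕ → Fin k) (hab : a ≤ b) (hbn : b ≤ n)
    (hout : ∀ l, l ≤ a ∨ b ≤ l → q l = p l)
    (hseg : ∑ l ∈ Finset.Ico a b, B l (p l) (p (l + 1))
      ≤ ∑ l ∈ Finset.Ico a b, B l (q l) (q (l + 1))) :
    W B n p ≤ W B n q := by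
  rw [W_three B hab hbn p, W_three B hab hbn q]
  have h1 : ∑ l ∈ Finset.range a, B l (q l) (q (l + 1))
      = ∑ l ∈ Finset.range a, B l (p l) (p (l + 1)) := by
    refine Finset.sum_congr rfl fun l hl => ?_
    rw [Finset.mem_range] at hl
    rw [hout l (Or.inl hl.le), hout (l + 1) (Or.inl hl)]
  have h2 : ∑ l ∈ Finset.Ico b n, B l (q l) (q (l + 1))
      = ∑ l ∈ Finset.Ico b n, B l (p l) (p (l + 1)) := by
    refine Finset.sum_congr rfl fun l hl => ?_
    rw [Finset.mem_Ico] at hl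
    rw [hout l (Or.inr hl.1), hout (l + 1) (Or.inr (by omega))]
  rw [h1, h2]
  linarith

lemma splice (B : ℕ → Mat k) (p : ℕ → Fin k) {a b n : ℕ} (hab : a < b) (hbn : b ≤ n)
    (hpab : p a = p b) :
    W B n p = W (fun l => if l < a then B l else B (l + (b - a))) (n - (b - a))
        (fun l => if l ≤ a then p l else p (l + (b - a)))
      + ∑ l ∈ Finset.Ico a b, B l (p l) (p (l + 1)) := by
  have han' : a ≤ n - (b - a) := by omega
  have hW' : W (fun l => if l < a then B l else B (l + (b - a))) (n - (b - a))
      (fun l => if l ≤ a then p l else p (l + (b - a)))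
      = ∑ l ∈ Finset.range a, B l (p l) (p (l + 1))
        + ∑ l ∈ Finset.Ico b n, B l (p l) (p (l + 1)) := by
    rw [W, Finset.range_eq_Ico, ← Finset.sum_Ico_consecutive _ (Nat.zero_le a) han']
    congr 1
    · refine Finset.sum_congr (by rw [Finset.range_eq_Ico]) fun l hl => ?_
      rw [Finset.range_eq_Ico, Finset.mem_Ico] at hl
      rw [if_pos hl.2, if_pos hl.2.le, if_pos (by omega : l + 1 ≤ a)]
    · rw [Finset.sum_Ico_eq_sum_range, Finset.sum_Ico_eq_sum_range]
      have hn : n - (b - a) - a = n - b := by omega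
      rw [hn]
      have hp' : ∀ m : ℕ, (if a + m ≤ a then p (a + m) else p (a + m + (b - a))) = p (b + m) := by
        intro m
        rcases Nat.eq_zero_or_pos m with rfl | hm
        · simp only [Nat.add_zero]
          rw [if_pos (le_refl a), hpab]
        · rw [if_neg (show ¬ (a + m ≤ a) from by omega),
            show a + m + (b - a) = b + m from by omega]
      refine Finset.sum_congr rfl fun m _ => ?_
      have hB' : (if a + m < a then B (a + m) else B (a + m + (b - a))) = B (b + m) := by
        rw [if_neg (show ¬ (a + m < a) from by omega),
          show a + m + (b - a) = b + m from by omega]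
      show (if a + m < a then B (a + m) else B (a + m + (b - a)))
          ((if a + m ≤ a then p (a + m) else p (a + m + (b - a))))
          ((if a + (m + 1) ≤ a then p (a + (m + 1)) else p (a + (m + 1) + (b - a))))
        = B (b + m) (p (b + m)) (p (b + m + 1))
      rw [hB', hp' m, hp' (m + 1)]
      rfl
  rw [W_three B hab.le hbn p, hW']
  ring

section L1
variable (A : Mat k) (κ : Fin k) (s ε Bb : ℝ)

/-- real path-weight w.r.t. the fixed matrix `A`. -/
def awt (A : Mat k) (c : ℕ) (q : ℕ → Fin k) : ℝ := ∑ l ∈ Finset.range c, A (q l) (q (l + 1))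

variable {A κ s ε Bb}

lemma seg_le_awt {n : ℕ} {B : ℕ → Mat k} (hcl : ∀ l < n, ∀ i j, |B l i j - A i j| ≤ ε)
    {a b : ℕ} (hbn : b ≤ n) (hab : a ≤ b) (p : ℕ → Fin k) :
    ∑ l ∈ Finset.Ico a b, B l (p l) (p (l + 1))
      ≤ awt A (b - a) (fun l => p (a + l)) + ε * ((b - a : ℕ) : ℝ) := by
  have h2 : ∑ l ∈ Finset.Ico a b, B l (p l) (p (l + 1))
      ≤ ∑ l ∈ Finset.Ico a b, (A (p l) (p (l + 1)) + ε) := by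
    refine Finset.sum_le_sum fun l hl => ?_
    rw [Finset.mem_Ico] at hl
    have h := abs_le.mp (hcl l (lt_of_lt_of_le hl.2 hbn) (p l) (p (l + 1)))
    linarith [h.1, h.2]
  have h3 : ∑ l ∈ Finset.Ico a b, (A (p l) (p (l + 1)) + ε)
      = awt A (b - a) (fun l => p (a + l)) + ε * ((b - a : ℕ) : ℝ) := by
    rw [Finset.sum_add_distrib, Finset.sum_const, Nat.card_Ico, nsmul_eq_mul, mul_comm, awt,
      Finset.sum_Ico_eq_sum_range]
    rfl
  linarith

/-- Open walks avoiding the arc `(κ,κ)` have weight at most `(s+ε)n + (k-1)(Bb-s)`. -/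
lemma L1open (hB : ∀ i j, |A i j| ≤ Bb) (hsB : s ≤ Bb) (hε : 0 ≤ ε)
    (Hs : ∀ c q, 1 ≤ c → c ≤ k → q c = q 0 → (∃ l < c, q l ≠ κ) → awt A c q ≤ s * c) :
    ∀ n (B : ℕ → Mat k) (p : ℕ → Fin k), (∀ l < n, ∀ i j, |B l i j - A i j| ≤ ε) →
      (∀ l < n, ¬(p l = κ ∧ p (l + 1) = κ)) →
      W B n p ≤ (s + ε) * n + ((k : ℝ) - 1) * (Bb - s) := by
  intro n
  induction n using Nat.strong_induction_on with
  | _ n ih =>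
  intro B p hcl hκp
  by_cases hnk : n < k
  · have h1 : W B n p ≤ (Bb + ε) * n := by
      rw [W]
      calc ∑ l ∈ Finset.range n, B l (p l) (p (l + 1))
          ≤ ∑ _l ∈ Finset.range n, (Bb + ε) := by
            refine Finset.sum_le_sum fun l hl => ?_
            rw [Finset.mem_range] at hl
            have h := abs_le.mp (hcl l hl (p l) (p (l + 1)))
            have h2 := abs_le.mp (hB (p l) (p (l + 1)))
            linarith [h.2, h2.2]
        _ = (Bb + ε) * n := by
            rw [Finset.sum_const, Finset.card_range, nsmul_eq_mul, mul_comm]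
    have hnk' : (n : ℝ) ≤ (k : ℝ) - 1 := by
      have : (n : ℝ) + 1 ≤ (k : ℝ) := by exact_mod_cast Nat.succ_le_of_lt hnk
      linarith
    nlinarith [mul_le_mul_of_nonneg_left hnk' (sub_nonneg.mpr hsB), h1]
  · push_neg at hnk
    obtain ⟨x, hx, y, hy, hxy, hpxy⟩ := Finset.exists_ne_map_eq_of_card_lt_of_maps_to
      (s := Finset.range (k + 1)) (t := (Finset.univ : Finset (Fin k)))
      (by simp) (fun x _ => Finset.mem_univ (p x))
    rw [Finset.mem_range] at hx hy
    obtain ⟨a, b, hab, hbk, hpab⟩ : ∃ a b, a < b ∧ b ≤ k ∧ p a = p b := by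
      rcases hxy.lt_or_gt with h | h
      exacts [⟨x, y, h, by omega, hpxy⟩, ⟨y, x, h, by omega, hpxy.symm⟩]
    have hbn : b ≤ n := hbk.trans hnk
    -- the removed circuit has weight at most (s+ε)(b-a)
    have hcirc : ∑ l ∈ Finset.Ico a b, B l (p l) (p (l + 1)) ≤ (s + ε) * ((b : ℝ) - a) := by
      have h4 : awt A (b - a) (fun l => p (a + l)) ≤ s * ((b : ℝ) - a) := by
        have := Hs (b - a) (fun l => p (a + l)) (by omega) (by omega)
          (by
            show p (a + (b - a)) = p (a + 0)
            rw [Nat.add_zero, show a + (b - a) = b from by omega]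
            exact hpab.symm)
          (by
            by_contra hno
            push_neg at hno
            have e0 : p a = κ := by
              have := hno 0 (by omega)
              rwa [Nat.add_zero] at this
            have e1 : p (a + 1) = κ := by
              rcases eq_or_lt_of_le (show 1 ≤ b - a from by omega) with h1 | h1
              · rw [show a + 1 = b from by omega, ← hpab]
                exact e0
              · exact hno 1 h1
            exact hκp a (by omega) ⟨e0, e1⟩)
        rw [show (((b - a : ℕ) : ℝ)) = (b : ℝ) - a from by
          rw [Nat.cast_sub hab.le]] at this
        exact this
      have h5 := seg_le_awt hcl hbn hab.le p
      rw [show (((b - a : ℕ) : ℝ)) = (b : ℝ) - a from by rw [Nat.cast_sub hab.le]] at h5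
      linarith
    rw [splice B p hab hbn hpab]
    set B' : ℕ → Mat k := fun l => if l < a then B l else B (l + (b - a)) with hB'def
    set p' : ℕ → Fin k := fun l => if l ≤ a then p l else p (l + (b - a)) with hp'def
    have harc : ∀ l, l < n - (b - a) →
        ∃ m, m < n ∧ p' l = p m ∧ p' (l + 1) = p (m + 1) ∧ B' l = B m := by
      intro l hl
      by_cases hla : l < a
      · exact ⟨l, by omega, by simp [hp'def, hla.le], by simp [hp'def, show l + 1 ≤ a from hla],
          by simp [hB'def, hla]⟩
      · refine ⟨l + (b - a), by omega, ?_, ?_, ?_⟩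
        · by_cases hla2 : l ≤ a
        
          · have hla3 : l = a := by omega
            simp only [hp'def, if_pos hla2]
            rw [hla3, hpab, show a + (b - a) = b from by omega]
          · simp only [hp'def, if_neg hla2]
        · simp only [hp'def, if_neg (show ¬ (l + 1 ≤ a) from by omega)]
          congr 1
          omega
        · simp only [hB'def, if_neg hla]
    have ihh := ih (n - (b - a)) (by omega) B' p'
      (fun l hl i j => by
        obtain ⟨m, hm, _, _, hBm⟩ := harc l hl
        rw [hBm]
        exact hcl m hm i j)
      (fun l hl => by
        obtain ⟨m, hm, h1, h2, _⟩ := harc l hl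
        rw [h1, h2]
        exact hκp m hm)
    have hcast : ((n - (b - a) : ℕ) : ℝ) = (n : ℝ) - ((b : ℝ) - a) := by
      rw [Nat.cast_sub (by omega), Nat.cast_sub hab.le]
    rw [hcast] at ihh
    nlinarith [ihh, hcirc]

/-- Closed walks avoiding the arc `(κ,κ)` have weight at most `(s+ε)n`. -/
lemma L1closed (hB : ∀ i j, |A i j| ≤ Bb) (hsB : s ≤ Bb) (hε : 0 ≤ ε)
    (Hs : ∀ c q, 1 ≤ c → c ≤ k → q c = q 0 → (∃ l < c, q l ≠ κ) → awt A c q ≤ s * c) :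
    ∀ n (B : ℕ → Mat k) (p : ℕ → Fin k), (∀ l < n, ∀ i j, |B l i j - A i j| ≤ ε) →
      (∀ l < n, ¬(p l = κ ∧ p (l + 1) = κ)) → 1 ≤ n → p n = p 0 →
      W B n p ≤ (s + ε) * n := by
  intro n
  induction n using Nat.strong_induction_on with
  | _ n ih =>
  intro B p hcl hκp hn1 hcl0
  by_cases hnk : n ≤ k
  · have h4 : awt A (n - 0) (fun l => p (0 + l)) ≤ s * ((n : ℝ) - 0) := by
      have := Hs (n - 0) (fun l => p (0 + l)) (by omega) (by omega)
        (by
          show p (0 + (n - 0)) = p (0 + 0)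
          simp only [Nat.zero_add, Nat.sub_zero]
          exact hcl0)
        (by
          by_contra hno
          push_neg at hno
          have e0 : p 0 = κ := by
            have := hno 0 (by omega)
            rwa [Nat.zero_add] at this
          have e1 : p 1 = κ := by
            rcases eq_or_lt_of_le (show 1 ≤ n - 0 from by omega) with h1 | h1
            · rw [show (1 : ℕ) = n from by omega, hcl0]
              exact e0
            · have := hno 1 h1
              rwa [Nat.zero_add] at this
          exact hκp 0 (by omega) ⟨e0, e1⟩)
      rw [show (((n - 0 : ℕ) : ℝ)) = (n : ℝ) - 0 from by simp] at this
      exact this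
    have h5 := seg_le_awt hcl (le_refl n) (Nat.zero_le n) p
    rw [show (((n - 0 : ℕ) : ℝ)) = (n : ℝ) - 0 from by simp] at h5
    have hW : W B n p = ∑ l ∈ Finset.Ico 0 n, B l (p l) (p (l + 1)) := by
      rw [W, Finset.range_eq_Ico]
    rw [hW]
    linarith
  · push_neg at hnk
    obtain ⟨x, hx, y, hy, hxy, hpxy⟩ := Finset.exists_ne_map_eq_of_card_lt_of_maps_to
      (s := Finset.range (k + 1)) (t := (Finset.univ : Finset (Fin k)))
      (by simp) (fun x _ => Finset.mem_univ (p x))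
    rw [Finset.mem_range] at hx hy
    obtain ⟨a, b, hab, hbk, hpab⟩ : ∃ a b, a < b ∧ b ≤ k ∧ p a = p b := by
      rcases hxy.lt_or_gt with h | h
      exacts [⟨x, y, h, by omega, hpxy⟩, ⟨y, x, h, by omega, hpxy.symm⟩]
    have hbn : b ≤ n := hbk.trans hnk.le
    have hcirc : ∑ l ∈ Finset.Ico a b, B l (p l) (p (l + 1)) ≤ (s + ε) * ((b : ℝ) - a) := by
      have h4 : awt A (b - a) (fun l => p (a + l)) ≤ s * ((b : ℝ) - a) := by
        have := Hs (b - a) (fun l => p (a + l)) (by omega) (by omega)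
          (by
            show p (a + (b - a)) = p (a + 0)
            rw [Nat.add_zero, show a + (b - a) = b from by omega]
            exact hpab.symm)
          (by
            by_contra hno
            push_neg at hno
            have e0 : p a = κ := by
              have := hno 0 (by omega)
              rwa [Nat.add_zero] at this
            have e1 : p (a + 1) = κ := by
              rcases eq_or_lt_of_le (show 1 ≤ b - a from by omega) with h1 | h1
              · rw [show a + 1 = b from by omega, ← hpab]
                exact e0
              · exact hno 1 h1
            exact hκp a (by omega) ⟨e0, e1⟩)
        rw [show (((b - a : ℕ) : ℝ)) = (b : ℝ) - a from by
          rw [Nat.cast_sub hab.le]] at this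
        exact this
      have h5 := seg_le_awt hcl hbn hab.le p
      rw [show (((b - a : ℕ) : ℝ)) = (b : ℝ) - a from by rw [Nat.cast_sub hab.le]] at h5
      linarith
    rw [splice B p hab hbn hpab]
    set B' : ℕ → Mat k := fun l => if l < a then B l else B (l + (b - a)) with hB'def
    set p' : ℕ → Fin k := fun l => if l ≤ a then p l else p (l + (b - a)) with hp'def
    have harc : ∀ l, l < n - (b - a) →
        ∃ m, m < n ∧ p' l = p m ∧ p' (l + 1) = p (m + 1) ∧ B' l = B m := by
      intro l hl
      by_cases hla : l < a
      · exact ⟨l, by omega, by simp [hp'def, hla.le], by simp [hp'def, show l + 1 ≤ a from hla],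
          by simp [hB'def, hla]⟩
      · refine ⟨l + (b - a), by omega, ?_, ?_, ?_⟩
        · by_cases hla2 : l ≤ a
          · have hla3 : l = a := by omega
            simp only [hp'def, if_pos hla2]
            rw [hla3, hpab, show a + (b - a) = b from by omega]
          · simp only [hp'def, if_neg hla2]
        · simp only [hp'def, if_neg (show ¬ (l + 1 ≤ a) from by omega)]
          congr 1
          omega
        · simp only [hB'def, if_neg hla]
    have hp'closed : p' (n - (b - a)) = p' 0 := by
      have h0 : p' 0 = p 0 := by simp [hp'def]
      have hn' : ¬ (n - (b - a) ≤ a) := by omega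
      have h1 : p' (n - (b - a)) = p (n - (b - a) + (b - a)) := by
        simp only [hp'def, if_neg hn']
      rw [h0, h1, show n - (b - a) + (b - a) = n from by omega, hcl0]
    have ihh := ih (n - (b - a)) (by omega) B' p'
      (fun l hl i j => by
        obtain ⟨m, hm, _, _, hBm⟩ := harc l hl
        rw [hBm]
        exact hcl m hm i j)
      (fun l hl => by
        obtain ⟨m, hm, h1, h2, _⟩ := harc l hl
        rw [h1, h2]
        exact hκp m hm)
      (by omega) hp'closed
    have hcast : ((n - (b - a) : ℕ) : ℝ) = (n : ℝ) - ((b : ℝ) - a) := by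
      rw [Nat.cast_sub (by omega), Nat.cast_sub hab.le]
    rw [hcast] at ihh
    nlinarith [ihh, hcirc]

end L1
end Stmt6Aux
namespace Stmt6Aux
open MaxPlus Finset

variable {k : ℕ}

lemma pathWeight_toMP (A : Mat k) (n : ℕ) (p : ℕ → Fin k) :
    pathWeight (toMP A) n p = ((awt A n p : ℝ) : Rmax) := by
  unfold pathWeight awt
  rw [coe_sum]
  rfl

lemma circAw_toMP (A : Mat k) (n : ℕ) (p : ℕ → Fin k) :
    circAw (toMP A) n p = ((awt A n p / (n : ℝ) : ℝ) : Rmax) := by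
  unfold circAw
  rw [pathWeight_toMP, WithBot.map_coe]

/-- the periodized circuit of an index of the `mpRho` sup. -/
def per (c : Σ n : Fin k, Fin (n.1 + 1) → Fin k) : ℕ → Fin k :=
  fun l => c.2 ⟨l % (c.1.1 + 1), Nat.mod_lt _ (Nat.succ_pos _)⟩

def G (A : Mat k) (c : Σ n : Fin k, Fin (n.1 + 1) → Fin k) : ℝ :=
  awt A (c.1.1 + 1) (per c) / ((c.1.1 + 1 : ℕ) : ℝ)

lemma crit_all (A : Mat k) (κ : Fin k) (hκu : ∀ i, IsCritNode (toMP A) i → i = κ)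
    (n : ℕ) (p : ℕ → Fin k) (hn : 0 < n) (hcl : p n = p 0)
    (hav : circAw (toMP A) n p = mpRho (toMP A)) : ∀ l < n, p l = κ := by
  intro l hl
  refine hκu _ ⟨p (l + 1), n, p, hn, hcl, ?_, hav, l, hl, rfl, rfl⟩
  rw [pathWeight_toMP]
  exact WithBot.coe_ne_bot

lemma rho_diag (A : Mat k) (hk : 0 < k) (κ : Fin k)
    (hκu : ∀ i, IsCritNode (toMP A) i → i = κ) :
    mpRho (toMP A) = ((A κ κ : ℝ) : Rmax) := by
  haveI : Nonempty (Σ n : Fin k, Fin (n.1 + 1) → Fin k) := ⟨⟨⟨0, hk⟩, fun _ => ⟨0, hk⟩⟩⟩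
  have hrho : mpRho (toMP A) = ((Finset.univ.sup' Finset.univ_nonempty (G A) : ℝ) : Rmax) := by
    rw [Finset.coe_sup']
    refine Finset.sup_congr rfl fun c _ => ?_
    rw [circAw_toMP]
    rfl
  obtain ⟨c₀, -, hc₀⟩ := Finset.exists_mem_eq_sup' Finset.univ_nonempty (G A)
  have hper : per c₀ (c₀.1.1 + 1) = per c₀ 0 := congrArg c₀.2 (Fin.ext (by simp))
  have hav : circAw (toMP A) (c₀.1.1 + 1) (per c₀) = mpRho (toMP A) := by
    rw [circAw_toMP, hrho, hc₀]
    rfl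
  have hall := crit_all A κ hκu (c₀.1.1 + 1) (per c₀) (Nat.succ_pos _) hper hav
  have hawt : awt A (c₀.1.1 + 1) (per c₀) = ((c₀.1.1 + 1 : ℕ) : ℝ) * A κ κ := by
    unfold awt
    rw [Finset.sum_congr rfl (fun l hl => ?_), Finset.sum_const, Finset.card_range, nsmul_eq_mul]
    rw [Finset.mem_range] at hl
    rw [hall l hl]
    rcases eq_or_lt_of_le (Nat.succ_le_of_lt hl) with h | h
    · rw [show l + 1 = c₀.1.1 + 1 from h, hper, hall 0 (Nat.succ_pos _)]
    · rw [hall (l + 1) h]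
  rw [hrho, hc₀]
  have : G A c₀ = A κ κ := by
    unfold G
    rw [hawt]
    field_simp
  rw [this]

section Sval
variable (A : Mat k) (κ : Fin k)

/-- extension of a `Fin (k+1)`-indexed path to `ℕ`. -/
def ext' (q : Fin (k + 1) → Fin k) : ℕ → Fin k :=
  fun l => q ⟨min l k, Nat.lt_succ_of_le (min_le_right l k)⟩

open Classical in
/-- all closed walks of length `1..k` visiting a node other than `κ`. -/
def Fs : Finset (ℕ × (Fin (k + 1) → Fin k)) :=
  (Finset.Icc 1 k ×ˢ Finset.univ).filter fun cp =>
    ext' cp.2 cp.1 = ext' cp.2 0 ∧ ∃ l < cp.1, ext' cp.2 l ≠ κ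

lemma Fs_nonempty (hk2 : 2 ≤ k) : (Fs κ).Nonempty := by
  obtain ⟨v, hv⟩ := Fintype.exists_ne_of_one_lt_card (by rw [Fintype.card_fin]; omega) κ
  refine ⟨(1, fun _ => v), ?_⟩
  rw [Fs, Finset.mem_filter]
  exact ⟨Finset.mem_product.mpr ⟨Finset.mem_Icc.mpr ⟨le_refl 1, by omega⟩, Finset.mem_univ _⟩,
    rfl, 0, by omega, hv⟩

/-- second maximum: max average weight of closed walks through a node `≠ κ`. -/
def sval (h : (Fs κ).Nonempty) : ℝ :=
  (Fs κ).sup' h fun cp => awt A cp.1 (ext' cp.2) / (cp.1 : ℝ)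

variable {A κ}

lemma ext'_eq (q : Fin (k + 1) → Fin k) (p : ℕ → Fin k) (hq : ∀ m : Fin (k + 1), q m = p m.1) :
    ∀ l ≤ k, ext' q l = p l := by
  intro l hl
  rw [ext', hq]
  show p (min l k) = p l
  rw [min_eq_left hl]

lemma sval_H (h : (Fs κ).Nonempty) : ∀ c q, 1 ≤ c → c ≤ k → q c = q 0 →
    (∃ l < c, q l ≠ κ) → awt A c q ≤ sval A κ h * c := by
  intro c q hc1 hck hcq hex
  obtain ⟨l0, hl0, hl0κ⟩ := hex
  have hext : ∀ l ≤ k, ext' (fun m : Fin (k + 1) => q m.1) l = q l :=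
    ext'_eq _ q (fun _ => rfl)
  have hmem : (c, fun m : Fin (k + 1) => q m.1) ∈ Fs κ := by
    rw [Fs, Finset.mem_filter]
    refine ⟨Finset.mem_product.mpr ⟨Finset.mem_Icc.mpr ⟨hc1, hck⟩, Finset.mem_univ _⟩,
      ?_, l0, hl0, ?_⟩
    · rw [hext c hck, hext 0 (Nat.zero_le k)]
      exact hcq
    · rw [hext l0 (by omega)]
      exact hl0κ
  have hle := Finset.le_sup' (fun cp : ℕ × (Fin (k + 1) → Fin k) =>
    awt A cp.1 (ext' cp.2) / (cp.1 : ℝ)) hmem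
  have hawt : awt A c (ext' (fun m : Fin (k + 1) => q m.1)) = awt A c q := by
    unfold awt
    refine Finset.sum_congr rfl fun l hl => ?_
    rw [Finset.mem_range] at hl
    rw [hext l (by omega), hext (l + 1) (by omega)]
  rw [hawt] at hle
  have hc0 : (0 : ℝ) < c := by exact_mod_cast hc1
  calc awt A c q = (awt A c q / c) * c := by field_simp
    _ ≤ sval A κ h * c := mul_le_mul_of_nonneg_right hle hc0.le

lemma sval_lt (hk : 0 < k) (hκu : ∀ i, IsCritNode (toMP A) i → i = κ)
    (h : (Fs κ).Nonempty) : sval A κ h < A κ κ := by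
  have hrho := rho_diag A hk κ hκu
  rw [sval, Finset.sup'_lt_iff]
  rintro ⟨c, qh⟩ hmem
  rw [Fs, Finset.mem_filter, Finset.mem_product, Finset.mem_Icc] at hmem
  obtain ⟨⟨⟨hc1, hck⟩, -⟩, hclosed, l0, hl0, hl0κ⟩ := hmem
  have hce : c - 1 + 1 = c := by omega
  set cF : Σ n : Fin k, Fin (n.1 + 1) → Fin k :=
    ⟨⟨c - 1, by omega⟩, fun m => ext' qh m.1⟩ with hcF
  have hper : ∀ l, per cF l = ext' qh (l % c) := by
    intro l
    show ext' qh (l % (c - 1 + 1)) = ext' qh (l % c)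
    rw [hce]
  have hperc : per cF (c - 1 + 1) = per cF 0 := by
    rw [hper, hper, hce, Nat.mod_self, Nat.zero_mod]
  have hawt : awt A (c - 1 + 1) (per cF) = awt A c (ext' qh) := by
    unfold awt
    refine Finset.sum_congr (by rw [hce]) fun l hl => ?_
    rw [Finset.mem_range] at hl
    rw [hper l, hper (l + 1), Nat.mod_eq_of_lt hl]
    rcases eq_or_lt_of_le (Nat.succ_le_of_lt hl) with h1 | h1
    · rw [show l + 1 = c from h1, Nat.mod_self, ← hclosed]
    · rw [Nat.mod_eq_of_lt h1]
  have h1 := Finset.le_sup (s := Finset.univ)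
    (f := fun c : Σ n : Fin k, Fin (n.1 + 1) → Fin k =>
      circAw (toMP A) (c.1.1 + 1) fun l => c.2 ⟨l % (c.1.1 + 1), Nat.mod_lt _ (Nat.succ_pos _)⟩)
    (Finset.mem_univ cF)
  have h1' : circAw (toMP A) (c - 1 + 1) (per cF) ≤ mpRho (toMP A) := h1
  rw [circAw_toMP, hrho] at h1'
  have h2 := WithBot.coe_le_coe.mp h1'
  rw [hawt] at h2
  rw [show ((c - 1 + 1 : ℕ) : ℝ) = (c : ℝ) from by rw [hce]] at h2
  refine lt_of_le_of_ne h2 fun heq => ?_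
  have hav : circAw (toMP A) (c - 1 + 1) (per cF) = mpRho (toMP A) := by
    rw [circAw_toMP, hrho, hawt,
      show ((c - 1 + 1 : ℕ) : ℝ) = (c : ℝ) from by rw [hce], heq]
  have hall := crit_all A κ hκu (c - 1 + 1) (per cF) (Nat.succ_pos _) hperc hav
  refine hl0κ ?_
  have := hall l0 (by omega)
  rwa [hper l0, Nat.mod_eq_of_lt (by omega)] at this

end Sval
end Stmt6Aux
namespace Stmt6Aux
open MaxPlus Finset

variable {k : ℕ}

/-- The modified path: `κ` strictly between `a` and `b`, `p` elsewhere. -/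
def mid (κ : Fin k) (p : ℕ → Fin k) (a b : ℕ) : ℕ → Fin k :=
  fun l => if a < l ∧ l < b then κ else p l

lemma mid_pos {κ : Fin k} {p : ℕ → Fin k} {a b l : ℕ} (h : a < l ∧ l < b) :
    mid κ p a b l = κ := if_pos h

lemma mid_neg {κ : Fin k} {p : ℕ → Fin k} {a b l : ℕ} (h : ¬(a < l ∧ l < b)) :
    mid κ p a b l = p l := if_neg h

section Improve
variable {A : Mat k} {κ : Fin k} {s ε Bb : ℝ}

lemma seg_low {n : ℕ} {B : ℕ → Mat k} (hcl : ∀ l < n, ∀ i j, |B l i j - A i j| ≤ ε)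
    {a b : ℕ} (hab : a ≤ b) (hbn : b ≤ n) (q : ℕ → Fin k)
    (hq : ∀ l, a ≤ l → l < b → q l = κ ∧ q (l + 1) = κ) :
    (A κ κ - ε) * ((b : ℝ) - a) ≤ ∑ l ∈ Finset.Ico a b, B l (q l) (q (l + 1)) := by
  have h1 : ∀ l ∈ Finset.Ico a b, A κ κ - ε ≤ B l (q l) (q (l + 1)) := by
    intro l hl
    rw [Finset.mem_Ico] at hl
    obtain ⟨e1, e2⟩ := hq l hl.1 hl.2
    rw [e1, e2]
    have h := abs_le.mp (hcl l (lt_of_lt_of_le hl.2 hbn) κ κ)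
    linarith [h.1]
  calc (A κ κ - ε) * ((b : ℝ) - a) = ∑ _l ∈ Finset.Ico a b, (A κ κ - ε) := by
        rw [Finset.sum_const, Nat.card_Ico, nsmul_eq_mul, Nat.cast_sub hab, mul_comm]
    _ ≤ _ := Finset.sum_le_sum h1

lemma improve_core (hk2 : 2 ≤ k)
    (hBb : ∀ i j, |A i j| ≤ Bb) (hsB : s ≤ Bb) (hsB2 : -Bb ≤ s)
    (Hs : ∀ c q, 1 ≤ c → c ≤ k → q c = q 0 → (∃ l < c, q l ≠ κ) → awt A c q ≤ s * c)
    (hslt : s < A κ κ)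
    (hε : ε = (A κ κ - s) / 4)
    {T : ℕ} (hT : (A κ κ - s) / 2 * (T : ℝ) ≥ 8 * Bb + 2 * (k : ℝ) * Bb + 8)
    (hTk : k + 2 ≤ T)
    (B : ℕ → Mat k) (p : ℕ → Fin k)
    (hcl : ∀ l < 2 * T, ∀ i j, |B l i j - A i j| ≤ ε)
    {a b : ℕ} (ha : a < T) (hb : T < b) (hb2 : b ≤ 2 * T)
    (hinter : ∀ m, a < m → m < b → p m ≠ κ)
    (hA : p a = κ ∨ a = 0) (hB : p b = κ ∨ b = 2 * T) :
    ∃ q : ℕ → Fin k, q 0 = p 0 ∧ q (2 * T) = p (2 * T) ∧ q T = κ ∧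
      W B (2 * T) p ≤ W B (2 * T) q := by
  -- basic numeric facts
  have hρ12 := abs_le.mp (hBb κ κ)
  have hkBb : (0 : ℝ) ≤ Bb := le_trans (abs_nonneg _) (hBb κ κ)
  have hd : (0 : ℝ) < A κ κ - s := by linarith
  have hε0 : 0 ≤ ε := by rw [hε]; linarith
  have hkR : (2 : ℝ) ≤ (k : ℝ) := by exact_mod_cast hk2
  have hkBs : ((k : ℝ) - 1) * (Bb - s) ≤ 2 * (k : ℝ) * Bb := by
    nlinarith [mul_le_mul_of_nonneg_left (show -s ≤ Bb from by linarith)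
      (show (0 : ℝ) ≤ (k : ℝ) - 1 from by linarith),
      mul_le_mul_of_nonneg_left (show Bb - s ≤ 2 * Bb from by linarith)
      (show (0 : ℝ) ≤ (k : ℝ) - 1 from by linarith)]
  have hab2 : a + 2 ≤ b := by omega
  have hcast : ((b - a : ℕ) : ℝ) = (b : ℝ) - (a : ℝ) := Nat.cast_sub (by omega)
  -- generic entry lower bound
  have harc : ∀ l < 2 * T, ∀ x y, -(Bb + ε) ≤ B l x y := by
    intro l hl x y
    have h1 := abs_le.mp (hcl l hl x y)
    have h2 := abs_le.mp (hBb x y)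
    linarith [h1.1, h2.1]
  have hout : ∀ l, l ≤ a ∨ b ≤ l → mid κ p a b l = p l := fun l hl => mid_neg (by omega)
  -- upper bound for the p-segment, via L1open (valid in all cases)
  have hpseg : ∑ l ∈ Finset.Ico a b, B l (p l) (p (l + 1))
      = W (fun l => B (a + l)) (b - a) (fun l => p (a + l)) := by
    rw [Finset.sum_Ico_eq_sum_range]
    rfl
  have hκarc : ∀ l < b - a, ¬((fun l => p (a + l)) l = κ ∧ (fun l => p (a + l)) (l + 1) = κ) := by
    intro l hl he
    obtain ⟨e1, e2⟩ := he
    rcases Nat.eq_zero_or_pos l with rfl | hl0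
    · exact hinter (a + 1) (by omega) (by omega) e2
    · exact hinter (a + l) (by omega) (by omega) e1
  have hclshift : ∀ l < b - a, ∀ i j, |(fun l => B (a + l)) l i j - A i j| ≤ ε :=
    fun l hl i j => hcl (a + l) (by omega) i j
  refine ⟨mid κ p a b, mid_neg (by omega), mid_neg (by omega), mid_pos ⟨ha, hb⟩, ?_⟩
  by_cases hclo : p a = κ ∧ p b = κ
  · -- closed case
    have hup : W (fun l => B (a + l)) (b - a) (fun l => p (a + l)) ≤ (s + ε) * ((b - a : ℕ) : ℝ) :=
      L1closed hBb hsB hε0 Hs (b - a) _ _ hclshift hκarc (by omega)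
        (by
          show p (a + (b - a)) = p (a + 0)
          rw [Nat.add_zero, show a + (b - a) = b from by omega, hclo.2, hclo.1])
    have hq' : ∀ l, a ≤ l → l < b → mid κ p a b l = κ ∧ mid κ p a b (l + 1) = κ := by
      intro l h1 h2
      constructor
      · rcases eq_or_lt_of_le h1 with rfl | h1'
        · rw [mid_neg (by omega)]
          exact hclo.1
        · exact mid_pos ⟨h1', h2⟩
      · rcases eq_or_lt_of_le (Nat.succ_le_of_lt h2) with heq | h2'
        · rw [show l + 1 = b from heq, mid_neg (by omega)]
          exact hclo.2
        · exact mid_pos ⟨by omega, h2'⟩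
    have hlow := seg_low hcl (by omega : a ≤ b) hb2 (mid κ p a b) hq'
    refine seg_compare B p (mid κ p a b) (by omega) hb2 hout ?_
    rw [hpseg]
    rw [hcast] at hup
    have hcmp : (s + ε) * ((b : ℝ) - a) ≤ (A κ κ - ε) * ((b : ℝ) - a) := by
      have hba : (0 : ℝ) ≤ (b : ℝ) - a := by
        rw [← hcast]
        positivity
      nlinarith [hba, hd]
    linarith
  · -- open case : one of the two ends of the segment is an end of the whole path
    have hor : a = 0 ∨ b = 2 * T := by
      rcases hA with h1 | h1
      · rcases hB with h2 | h2
        · exact absurd ⟨h1, h2⟩ hclo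
        · exact Or.inr h2
      · exact Or.inl h1
    have hxT : T + 1 ≤ b - a := by omega
    have hup : W (fun l => B (a + l)) (b - a) (fun l => p (a + l))
        ≤ (s + ε) * ((b - a : ℕ) : ℝ) + ((k : ℝ) - 1) * (Bb - s) :=
      L1open hBb hsB hε0 Hs (b - a) _ _ hclshift hκarc
    obtain ⟨b', rfl⟩ : ∃ b', b = b' + 1 := ⟨b - 1, by omega⟩
    -- lower bound for the modified segment : split off first and last arcs
    have hsq1 : ∑ l ∈ Finset.Ico a (b' + 1), B l (mid κ p a (b' + 1) l) (mid κ p a (b' + 1) (l + 1))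
        = ∑ l ∈ Finset.Ico a b', B l (mid κ p a (b' + 1) l) (mid κ p a (b' + 1) (l + 1))
          + B b' (mid κ p a (b' + 1) b') (mid κ p a (b' + 1) (b' + 1)) :=
      Finset.sum_Ico_succ_top (by omega) _
    have hsq2 : ∑ l ∈ Finset.Ico a b', B l (mid κ p a (b' + 1) l) (mid κ p a (b' + 1) (l + 1))
        = B a (mid κ p a (b' + 1) a) (mid κ p a (b' + 1) (a + 1))
          + ∑ l ∈ Finset.Ico (a + 1) b', B l (mid κ p a (b' + 1) l) (mid κ p a (b' + 1) (l + 1)) :=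
      Finset.sum_eq_sum_Ico_succ_bot (by omega) _
    have hmidlow := seg_low hcl (show a + 1 ≤ b' from by omega) (show b' ≤ 2 * T from by omega)
      (mid κ p a (b' + 1))
      (by
        intro l h1 h2
        exact ⟨mid_pos ⟨by omega, by omega⟩, mid_pos ⟨by omega, by omega⟩⟩)
    have ht1 : -(Bb + ε) ≤ B a (mid κ p a (b' + 1) a) (mid κ p a (b' + 1) (a + 1)) :=
      harc a (by omega) _ _
    have ht2 : -(Bb + ε) ≤ B b' (mid κ p a (b' + 1) b') (mid κ p a (b' + 1) (b' + 1)) :=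
      harc b' (by omega) _ _
    refine seg_compare B p (mid κ p a (b' + 1)) (by omega) hb2 hout ?_
    rw [hpseg, hsq1, hsq2]
    rw [hcast] at hup
    -- arithmetic
    have hbx : (T : ℝ) + 1 ≤ ((b' + 1 : ℕ) : ℝ) - a := by
      rw [← hcast]
      exact_mod_cast hxT
    have hTub : (A κ κ - s) / 2 * ((T : ℝ) + 1) ≤ (A κ κ - s) / 2 * (((b' + 1 : ℕ) : ℝ) - a) :=
      mul_le_mul_of_nonneg_left hbx (by linarith)
    have hcb : ((b' + 1 : ℕ) : ℝ) = (b' : ℝ) + 1 := by push_cast; ring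
    rw [hcb] at hup hTub
    push_cast at hmidlow
    have key : (s + ε) * ((b' : ℝ) + 1 - a) + ((k : ℝ) - 1) * (Bb - s)
        ≤ (A κ κ - ε) * ((b' : ℝ) - (a + 1)) - 2 * (Bb + ε) := by
      nlinarith [hTub, hT, hkBs, hρ12.1, hρ12.2, hkBb, hd]
    linarith

end Improve
end Stmt6Aux
namespace Stmt6Aux
open MaxPlus Finset

variable {k : ℕ}

section Improve2
variable {A : Mat k} {κ : Fin k} {s ε Bb : ℝ}

lemma sval_ge (hBb : ∀ i j, |A i j| ≤ Bb) (h : (Fs κ).Nonempty) : -Bb ≤ sval A κ h := by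
  obtain ⟨cp, hcp⟩ := h
  have hmem := hcp
  rw [Fs, Finset.mem_filter, Finset.mem_product, Finset.mem_Icc] at hmem
  obtain ⟨⟨⟨hc1, hck⟩, -⟩, -⟩ := hmem
  have hle := Finset.le_sup' (fun cp : ℕ × (Fin (k + 1) → Fin k) =>
    awt A cp.1 (ext' cp.2) / (cp.1 : ℝ)) hcp
  have hc0 : (0 : ℝ) < (cp.1 : ℝ) := by exact_mod_cast hc1
  have hlow : -Bb * (cp.1 : ℝ) ≤ awt A cp.1 (ext' cp.2) := by
    rw [awt, show (-Bb) * ((cp.1 : ℕ) : ℝ) = ∑ _l ∈ Finset.range cp.1, (-Bb) from by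
      rw [Finset.sum_const, Finset.card_range, nsmul_eq_mul, mul_comm]]
    refine Finset.sum_le_sum fun l _ => ?_
    have := abs_le.mp (hBb (ext' cp.2 l) (ext' cp.2 (l + 1)))
    linarith [this.1]
  have : -Bb ≤ awt A cp.1 (ext' cp.2) / (cp.1 : ℝ) := by
    rw [le_div_iff₀ hc0]
    exact hlow
  exact le_trans this hle

lemma improve (hk2 : 2 ≤ k)
    (hBb : ∀ i j, |A i j| ≤ Bb) (hsB : s ≤ Bb) (hsB2 : -Bb ≤ s)
    (Hs : ∀ c q, 1 ≤ c → c ≤ k → q c = q 0 → (∃ l < c, q l ≠ κ) → awt A c q ≤ s * c)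
    (hslt : s < A κ κ)
    (hε : ε = (A κ κ - s) / 4)
    {T : ℕ} (hT : (A κ κ - s) / 2 * (T : ℝ) ≥ 8 * Bb + 2 * (k : ℝ) * Bb + 8)
    (hTk : k + 2 ≤ T)
    (B : ℕ → Mat k) (p : ℕ → Fin k)
    (hcl : ∀ l < 2 * T, ∀ i j, |B l i j - A i j| ≤ ε) :
    ∃ q : ℕ → Fin k, q 0 = p 0 ∧ q (2 * T) = p (2 * T) ∧ q T = κ ∧
      W B (2 * T) p ≤ W B (2 * T) q := by
  classical
  by_cases hpT : p T = κ
  · exact ⟨p, rfl, rfl, hpT, le_refl _⟩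
  by_cases hSln : ((Finset.range T).filter (fun l => p l = κ)).Nonempty <;>
    by_cases hSrn : ((Finset.Ico (T + 1) (2 * T + 1)).filter (fun l => p l = κ)).Nonempty
  · -- visits on both sides
    set a := ((Finset.range T).filter (fun l => p l = κ)).max' hSln with hadef
    set b := ((Finset.Ico (T + 1) (2 * T + 1)).filter (fun l => p l = κ)).min' hSrn with hbdef
    have ham := Finset.max'_mem _ hSln
    rw [Finset.mem_filter, Finset.mem_range] at ham
    have hbm := Finset.min'_mem _ hSrn
    rw [Finset.mem_filter, Finset.mem_Ico] at hbm
    have hinter : ∀ m, a < m → m < b → p m ≠ κ := by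
      intro m h1 h2 hm
      rcases lt_trichotomy m T with h | h | h
      · have : m ≤ a := Finset.le_max' _ m
          (Finset.mem_filter.mpr ⟨Finset.mem_range.mpr h, hm⟩)
        omega
      · exact hpT (h ▸ hm)
      · have : b ≤ m := Finset.min'_le _ m
          (Finset.mem_filter.mpr ⟨Finset.mem_Ico.mpr ⟨by omega, by omega⟩, hm⟩)
        omega
    exact improve_core hk2 hBb hsB hsB2 Hs hslt hε hT hTk B p hcl
      ham.1 (by omega) (by omega) hinter (Or.inl ham.2) (Or.inl hbm.2)
  · -- visits only before T
    set a := ((Finset.range T).filter (fun l => p l = κ)).max' hSln with hadef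
    have ham := Finset.max'_mem _ hSln
    rw [Finset.mem_filter, Finset.mem_range] at ham
    have hnotr : ∀ m, T < m → m ≤ 2 * T → p m ≠ κ := by
      intro m h1 h2 hm
      exact hSrn ⟨m, Finset.mem_filter.mpr ⟨Finset.mem_Ico.mpr ⟨by omega, by omega⟩, hm⟩⟩
    have hinter : ∀ m, a < m → m < 2 * T → p m ≠ κ := by
      intro m h1 h2 hm
      rcases lt_trichotomy m T with h | h | h
      · have : m ≤ a := Finset.le_max' _ m
          (Finset.mem_filter.mpr ⟨Finset.mem_range.mpr h, hm⟩)
        omega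
      · exact hpT (h ▸ hm)
      · exact hnotr m h (by omega) hm
    exact improve_core hk2 hBb hsB hsB2 Hs hslt hε hT hTk B p hcl
      ham.1 (by omega) (le_refl _) hinter (Or.inl ham.2) (Or.inr rfl)
  · -- visits only after T
    set b := ((Finset.Ico (T + 1) (2 * T + 1)).filter (fun l => p l = κ)).min' hSrn with hbdef
    have hbm := Finset.min'_mem _ hSrn
    rw [Finset.mem_filter, Finset.mem_Ico] at hbm
    have hnotl : ∀ m, m < T → p m ≠ κ := by
      intro m h1 hm
      exact hSln ⟨m, Finset.mem_filter.mpr ⟨Finset.mem_range.mpr h1, hm⟩⟩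
    have hinter : ∀ m, 0 < m → m < b → p m ≠ κ := by
      intro m h1 h2 hm
      rcases lt_trichotomy m T with h | h | h
      · exact hnotl m h hm
      · exact hpT (h ▸ hm)
      · have : b ≤ m := Finset.min'_le _ m
          (Finset.mem_filter.mpr ⟨Finset.mem_Ico.mpr ⟨by omega, by omega⟩, hm⟩)
        omega
    exact improve_core hk2 hBb hsB hsB2 Hs hslt hε hT hTk B p hcl
      (by omega) (by omega) (by omega) hinter (Or.inr rfl) (Or.inl hbm.2)
  · -- no visit at all
    have hnotl : ∀ m, m < T → p m ≠ κ := by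
      intro m h1 hm
      exact hSln ⟨m, Finset.mem_filter.mpr ⟨Finset.mem_range.mpr h1, hm⟩⟩
    have hnotr : ∀ m, T < m → m ≤ 2 * T → p m ≠ κ := by
      intro m h1 h2 hm
      exact hSrn ⟨m, Finset.mem_filter.mpr ⟨Finset.mem_Ico.mpr ⟨by omega, by omega⟩, hm⟩⟩
    have hinter : ∀ m, 0 < m → m < 2 * T → p m ≠ κ := by
      intro m h1 h2 hm
      rcases lt_trichotomy m T with h | h | h
      · exact hnotl m h hm
      · exact hpT (h ▸ hm)
      · exact hnotr m h (by omega) hm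
    exact improve_core hk2 hBb hsB hsB2 Hs hslt hε hT hTk B p hcl
      (by omega) (by omega) (le_refl _) hinter (Or.inr rfl) (Or.inr rfl)

end Improve2
end Stmt6Aux
namespace Stmt6Aux
open MaxPlus Finset

variable {k : ℕ}

lemma getD_take {α : Type*} (L : List α) (d : α) (t l : ℕ) (h : l < t) :
    (L.take t).getD l d = L.getD l d := by
  simp [List.getD, List.getElem?_take, h]

lemma getD_drop {α : Type*} (L : List α) (d : α) (t l : ℕ) :
    (L.drop t).getD l d = L.getD (t + l) d := by
  simp [List.getD, List.getElem?_drop]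

theorem main_aux (hk2 : 2 ≤ k) (A : Mat k) (κ : Fin k)
    (hκu : ∀ i, IsCritNode (toMP A) i → i = κ) :
    ∃ (ε : ℝ) (n : ℕ), 0 < ε ∧ 0 < n ∧
      ∀ L : List (Mat k), L.length = n →
        (∀ C ∈ L, ∀ i j, |C i j - A i j| < ε) →
        IsRankOne (mpListProd (L.map toMP)) := by
  have hk : 0 < k := by omega
  have hF : (Fs κ).Nonempty := Fs_nonempty κ hk2
  set Bb : ℝ := ∑ i : Fin k, ∑ j : Fin k, |A i j| with hBbdef
  have hBb : ∀ i j, |A i j| ≤ Bb := by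
    intro i j
    rw [hBbdef]
    calc |A i j| ≤ ∑ j' : Fin k, |A i j'| :=
          Finset.single_le_sum (f := fun j' => |A i j'|) (fun j' _ => abs_nonneg _)
            (Finset.mem_univ j)
      _ ≤ ∑ i' : Fin k, ∑ j' : Fin k, |A i' j'| :=
          Finset.single_le_sum (f := fun i' => ∑ j' : Fin k, |A i' j'|)
            (fun i' _ => Finset.sum_nonneg fun j' _ => abs_nonneg _) (Finset.mem_univ i)
  have Hs := sval_H (A := A) hF
  have hslt : sval A κ hF < A κ κ := sval_lt hk hκu hF
  have hsB : sval A κ hF ≤ Bb := le_trans hslt.le (le_trans (le_abs_self _) (hBb κ κ))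
  have hsB2 : -Bb ≤ sval A κ hF := sval_ge hBb hF
  set s := sval A κ hF with hsdef
  set d := A κ κ - s with hddef
  have hd : 0 < d := by rw [hddef]; linarith
  set T : ℕ := max (k + 2) ⌈(8 * Bb + 2 * (k : ℝ) * Bb + 8) / (d / 2)⌉₊ with hTdef
  have hTk : k + 2 ≤ T := le_max_left _ _
  have hT : d / 2 * (T : ℝ) ≥ 8 * Bb + 2 * (k : ℝ) * Bb + 8 := by
    have h0 : ⌈(8 * Bb + 2 * (k : ℝ) * Bb + 8) / (d / 2)⌉₊ ≤ T := by
      rw [hTdef]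
      exact le_max_right _ _
    have h1 : ((⌈(8 * Bb + 2 * (k : ℝ) * Bb + 8) / (d / 2)⌉₊ : ℕ) : ℝ) ≤ (T : ℝ) := by
      exact_mod_cast h0
    have h2 : (8 * Bb + 2 * (k : ℝ) * Bb + 8) / (d / 2) ≤ (T : ℝ) :=
      le_trans (Nat.le_ceil _) h1
    have h3 : (0 : ℝ) < d / 2 := by linarith
    calc 8 * Bb + 2 * (k : ℝ) * Bb + 8
        = (8 * Bb + 2 * (k : ℝ) * Bb + 8) / (d / 2) * (d / 2) := by field_simp
      _ ≤ (T : ℝ) * (d / 2) := mul_le_mul_of_nonneg_right h2 h3.le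
      _ = d / 2 * (T : ℝ) := by ring
  refine ⟨d / 4, 2 * T, by linarith, by omega, ?_⟩
  intro L hlen hclose
  have hlt : (L.take T).length = T := by rw [List.length_take]; omega
  have hld : (L.drop T).length = T := by rw [List.length_drop, hlen]; omega
  have hne1 : L.take T ≠ [] := by
    intro h
    rw [h] at hlt
    simp at hlt
    omega
  have hne2 : L.drop T ≠ [] := by
    intro h
    rw [h] at hld
    simp at hld
    omega
  have hne0 : L ≠ [] := by
    intro h
    rw [h] at hlen
    simp at hlen
    omega
  have hclB : ∀ l < 2 * T, ∀ i j, |L.getD l (d0 k) i j - A i j| ≤ d / 4 := by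
    intro l hl i j
    have hmem : L.getD l (d0 k) ∈ L := by
      rw [List.getD_eq_getElem L _ (show l < L.length from by omega)]
      exact List.getElem_mem _
    exact (hclose _ hmem i j).le
  refine ⟨fun i => mpListProd ((L.take T).map toMP) i κ,
    fun j => mpListProd ((L.drop T).map toMP) κ j, ?_, ?_, ?_⟩
  · obtain ⟨pi, -, -, hPi⟩ := prod_eq hk κ (L.take T) κ (Or.inr hne1)
    refine ⟨κ, ?_⟩
    show mpListProd ((L.take T).map toMP) κ κ ≠ ⊥
    rw [hPi]
    exact WithBot.coe_ne_bot
  · obtain ⟨pj, -, -, hQj⟩ := prod_eq hk κ (L.drop T) κ (Or.inr hne2)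
    refine ⟨κ, ?_⟩
    show mpListProd ((L.drop T).map toMP) κ κ ≠ ⊥
    rw [hQj]
    exact WithBot.coe_ne_bot
  intro i j
  obtain ⟨pi, hpi0, hpin, hPi⟩ := prod_eq hk κ (L.take T) i (Or.inr hne1)
  obtain ⟨pj, hpj0, hpjn, hQj⟩ := prod_eq hk j (L.drop T) κ (Or.inr hne2)
  rw [hlt] at hpin
  rw [hld] at hpjn
  set pa : ℝ := W (fun l => (L.take T).getD l (d0 k)) (L.take T).length pi with hpadef
  set qb : ℝ := W (fun l => (L.drop T).getD l (d0 k)) (L.drop T).length pj with hqbdef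
  -- lower bound : concatenated path
  have hge : (((pa + qb : ℝ)) : Rmax) ≤ mpListProd (L.map toMP) i j := by
    set pc : ℕ → Fin k := fun l => if l < T then pi l else pj (l - T) with hpcdef
    have hpc0 : pc 0 = i := by
      show (if 0 < T then pi 0 else pj (0 - T)) = i
      rw [if_pos (show 0 < T from by omega)]
      exact hpi0
    have hpcn : pc (2 * T) = j := by
      show (if 2 * T < T then pi (2 * T) else pj (2 * T - T)) = j
      rw [if_neg (show ¬ (2 * T < T) from by omega), show 2 * T - T = T from by omega]
      exact hpjn
    have hw : W (fun l => L.getD l (d0 k)) L.length pc = pa + qb := by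
      rw [hlen, W_split (fun l => L.getD l (d0 k)) (show T ≤ 2 * T from by omega) pc]
      congr 1
      · rw [hpadef, hlt]
        refine W_congr (fun l hl => (getD_take L (d0 k) T l hl).symm) (fun l hl => ?_)
        by_cases hl' : l < T
        · show (if l < T then pi l else pj (l - T)) = pi l
          rw [if_pos hl']
        · have hlT : l = T := by omega
          rw [hlT]
          show (if T < T then pi T else pj (T - T)) = pi T
          rw [if_neg (lt_irrefl T), Nat.sub_self, hpj0, hpin]
      · rw [show 2 * T - T = T from by omega, hqbdef, hld]
        refine W_congr (fun l hl => (getD_drop L (d0 k) T l).symm) (fun l hl => ?_)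
        show (if T + l < T then pi (T + l) else pj (T + l - T)) = pj l
        rw [if_neg (show ¬ (T + l < T) from by omega), show T + l - T = l from by omega]
    have h := le_prod L pc
    rw [hw, hpc0] at h
    rw [hlen] at h
    rw [hpcn] at h
    exact h
  -- upper bound : improvement of an optimal path
  have hle : mpListProd (L.map toMP) i j ≤ ((pa + qb : ℝ) : Rmax) := by
    obtain ⟨p, hp0, hpn, hM⟩ := prod_eq hk j L i (Or.inr hne0)
    rw [hlen] at hpn hM
    obtain ⟨q, hq0, hqn, hqT, hWle⟩ := improve hk2 hBb hsB hsB2 Hs hslt rfl hT hTk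
      (fun l => L.getD l (d0 k)) p hclB
    have hsplitq : W (fun l => L.getD l (d0 k)) (2 * T) q
        = W (fun l => L.getD l (d0 k)) T q
          + W (fun l => L.getD (T + l) (d0 k)) T (fun l => q (T + l)) := by
      rw [W_split (fun l => L.getD l (d0 k)) (show T ≤ 2 * T from by omega) q,
        show 2 * T - T = T from by omega]
    have h1 := le_prod (L.take T) q
    rw [hlt, hq0, hp0, hqT] at h1
    have hWt : W (fun l => (L.take T).getD l (d0 k)) T q = W (fun l => L.getD l (d0 k)) T q :=
      W_congr (fun l hl => getD_take L (d0 k) T l hl) (fun l _ => rfl)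
    rw [hWt, hPi] at h1
    have h1' := WithBot.coe_le_coe.mp h1
    have h2 := le_prod (L.drop T) (fun l => q (T + l))
    rw [hld] at h2
    have e1 : q (T + 0) = κ := by
      rw [Nat.add_zero]
      exact hqT
    have e2 : q (T + T) = j := by
      rw [show T + T = 2 * T from by omega, hqn, hpn]
    rw [e1, e2] at h2
    have hWd : W (fun l => (L.drop T).getD l (d0 k)) T (fun l => q (T + l))
        = W (fun l => L.getD (T + l) (d0 k)) T (fun l => q (T + l)) :=
      W_congr (fun l hl => getD_drop L (d0 k) T l) (fun l _ => rfl)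
    rw [hWd, hQj] at h2
    have h2' := WithBot.coe_le_coe.mp h2
    rw [hM, WithBot.coe_le_coe]
    calc W (fun l => L.getD l (d0 k)) (2 * T) p
        ≤ W (fun l => L.getD l (d0 k)) (2 * T) q := hWle
      _ = _ + _ := hsplitq
      _ ≤ pa + qb := add_le_add h1' h2'
  show mpListProd (L.map toMP) i j
    = mpListProd ((L.take T).map toMP) i κ + mpListProd ((L.drop T).map toMP) κ j
  rw [hPi, hQj, ← WithBot.coe_add]
  exact le_antisymm hle hge

end Stmt6Aux
/-- if `A` has finite entries and its critical graph has exactly one node,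
then there are a neighborhood `V` of `A` (for the supremum norm) and an integer `n`
such that every max-plus product of `n` matrices of `V` has rank one. -/
theorem stmt6 (k : ℕ) (A : Fin k → Fin k → ℝ)
    (h : ∃! i, MaxPlus.IsCritNode (MaxPlus.toMP A) i) :
    ∃ (ε : ℝ) (n : ℕ), 0 < ε ∧ 0 < n ∧
      ∀ L : List (Fin k → Fin k → ℝ), L.length = n →
        (∀ B ∈ L, ∀ i j, |B i j - A i j| < ε) →
        MaxPlus.IsRankOne (MaxPlus.mpListProd (L.map MaxPlus.toMP)) := by
  obtain ⟨κ, hκc, hκu⟩ := h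
  by_cases hk2 : 2 ≤ k
  · exact Stmt6Aux.main_aux hk2 A κ hκu
  · have hk1 : k = 0 ∨ k = 1 := by omega
    rcases hk1 with rfl | rfl
    · exact κ.elim0
    · refine ⟨1, 1, one_pos, one_pos, ?_⟩
      intro L hlen hclose
      have hne : L ≠ [] := by
        intro h
        rw [h] at hlen
        simp at hlen
      obtain ⟨p, hp0, hpn, hM⟩ := Stmt6Aux.prod_eq (k := 1) one_pos 0 L 0 (Or.inr hne)
      refine ⟨fun _ => MaxPlus.mpListProd (L.map MaxPlus.toMP) 0 0, fun _ => (0 : Rmax),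
        ⟨0, by rw [hM]; exact WithBot.coe_ne_bot⟩, ⟨0, by simp⟩, ?_⟩
      intro i j
      have hi : i = 0 := Subsingleton.elim i 0
      have hj : j = 0 := Subsingleton.elim j 0
      rw [hi, hj]
      show MaxPlus.mpListProd (L.map MaxPlus.toMP) 0 0
        = MaxPlus.mpListProd (L.map MaxPlus.toMP) 0 0 + 0
      rw [add_zero]
end
end

section
/- The zero form does not belong to E_1 ∪ E_2. In particular, for the E_2 case: let pth_1 and pth_2 be elementary paths on the complete digraph on {1,…,k} with the same initial node i and the same final node κ ≠ i, and let c be an elementary circuit through κ; if the linear form w(·,pth_1) − |pth_1|·aw(·,c) − w(·,pth_2) + |pth_2|·aw(·,c) on ℝ^{k×k} is identically zero, then pth_1 = pth_2. -/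
open scoped BigOperators
open MeasureTheory

noncomputable section

namespace MaxPlus

private lemma pathCoeff_nonneg {k : ℕ} (n : ℕ) (p : ℕ → Fin k) (a b : Fin k) :
    0 ≤ pathCoeff n p a b := by
  unfold pathCoeff; positivity

private lemma pathCoeff_pos {k n : ℕ} {p : ℕ → Fin k} {a b : Fin k} {m : ℕ}
    (hm : m < n) (ha : p m = a) (hb : p (m + 1) = b) :
    0 < pathCoeff n p a b := by
  unfold pathCoeff
  rw [Nat.cast_pos, Finset.card_pos]
  exact ⟨m, by simp [hm, ha, hb]⟩

private lemma exists_of_pathCoeff_pos {k n : ℕ} {p : ℕ → Fin k} {a b : Fin k}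
    (h : 0 < pathCoeff n p a b) : ∃ l < n, p l = a ∧ p (l + 1) = b := by
  unfold pathCoeff at h
  rw [Nat.cast_pos, Finset.card_pos] at h
  obtain ⟨l, hl⟩ := h
  simp only [Finset.mem_filter, Finset.mem_range] at hl
  exact ⟨l, hl.1, hl.2⟩

private lemma pos_of_circ {k n : ℕ} {p : ℕ → Fin k} {a b : Fin k}
    (h : 0 < circCoeff n p a b) : 0 < pathCoeff n p a b := by
  unfold circCoeff at h
  by_contra hle
  push_neg at hle
  have h0 : pathCoeff n p a b = 0 := le_antisymm hle (pathCoeff_nonneg n p a b)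
  rw [h0, zero_div] at h
  exact lt_irrefl _ h

private lemma no_circ_in_path {k n nc : ℕ} {p pc : ℕ → Fin k}
    (hp : IsElemPath n p) (hc : IsElemCircuit nc pc)
    (H : ∀ m < nc, ∃ l < n, p l = pc m ∧ p (l + 1) = pc (m + 1)) : False := by
  obtain ⟨hnc, hcyc, _⟩ := hc
  obtain ⟨l₀, hl₀, hl₀0, -⟩ := H 0 hnc
  have key : ∀ m ≤ nc, l₀ + m ≤ n ∧ p (l₀ + m) = pc m := by
    intro m
    induction m with
    | zero => exact fun _ => ⟨by omega, hl₀0⟩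
    | succ m ih =>
      intro hm
      obtain ⟨hle, heq⟩ := ih (by omega)
      obtain ⟨l, hl, hla, hlb⟩ := H m (by omega)
      have hlm : l₀ + m = l := hp _ _ hle (by omega) (heq.trans hla.symm)
      refine ⟨by omega, ?_⟩
      rw [show l₀ + (m + 1) = l + 1 by omega]
      exact hlb
  obtain ⟨hle, heq⟩ := key nc le_rfl
  have := hp (l₀ + nc) l₀ hle (by omega) (by rw [heq, hcyc, hl₀0])
  omega

private lemma e2_aux {k : ℕ} {n₁ n₂ nc : ℕ} {p₁ p₂ pc : ℕ → Fin k}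
    (h₁ : IsElemPath n₁ p₁) (hc : IsElemCircuit nc pc)
    (h : ∀ a b, pathCoeff n₁ p₁ a b - (n₁ : ℝ) * circCoeff nc pc a b
      - pathCoeff n₂ p₂ a b + (n₂ : ℝ) * circCoeff nc pc a b = 0) :
    ¬ n₂ < n₁ := by
  intro hlt
  refine no_circ_in_path h₁ hc ?_
  intro m hm
  apply exists_of_pathCoeff_pos
  have hcc : 0 < pathCoeff nc pc (pc m) (pc (m + 1)) := pathCoeff_pos hm rfl rfl
  have hncR : (0 : ℝ) < nc := by exact_mod_cast hc.1
  have hcirc : 0 < circCoeff nc pc (pc m) (pc (m + 1)) := by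
    unfold circCoeff
    exact div_pos hcc hncR
  have heq := h (pc m) (pc (m + 1))
  have h2 := pathCoeff_nonneg n₂ p₂ (pc m) (pc (m + 1))
  have hltR : (n₂ : ℝ) < n₁ := by exact_mod_cast hlt
  have hprod : 0 < ((n₁ : ℝ) - n₂) * circCoeff nc pc (pc m) (pc (m + 1)) :=
    mul_pos (by linarith) hcirc
  rw [sub_mul] at hprod
  linarith

end MaxPlus

/-- the zero form does not belong to `E₁ ∪ E₂`; in particular, for `E₂`,
if the form `w(·,pth₁) - |pth₁| aw(·,c) - w(·,pth₂) + |pth₂| aw(·,c)` is identically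
zero then `pth₁ = pth₂`. -/
theorem stmt12 (k : ℕ) :
    (∀ (n₁ n₂ : ℕ) (p₁ p₂ : ℕ → Fin k),
      MaxPlus.IsElemCircuit n₁ p₁ → MaxPlus.IsElemCircuit n₂ p₂ →
      MaxPlus.circArcSet n₁ p₁ ≠ MaxPlus.circArcSet n₂ p₂ →
      ∃ i j, MaxPlus.circCoeff n₁ p₁ i j - MaxPlus.circCoeff n₂ p₂ i j ≠ 0) ∧
    ∀ (i κ : Fin k) (n₁ n₂ nc : ℕ) (p₁ p₂ pc : ℕ → Fin k),
      i ≠ κ → MaxPlus.IsElemPath n₁ p₁ → MaxPlus.IsElemPath n₂ p₂ →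
      p₁ 0 = i → p₂ 0 = i → p₁ n₁ = κ → p₂ n₂ = κ →
      MaxPlus.IsElemCircuit nc pc → (∃ l < nc, pc l = κ) →
      (∀ a b, MaxPlus.pathCoeff n₁ p₁ a b
          - (n₁ : ℝ) * MaxPlus.circCoeff nc pc a b
          - MaxPlus.pathCoeff n₂ p₂ a b
          + (n₂ : ℝ) * MaxPlus.circCoeff nc pc a b = 0) →
      n₁ = n₂ ∧ ∀ l ≤ n₁, p₁ l = p₂ l := by
  constructor
  · intro n₁ n₂ p₁ p₂ hc₁ hc₂ hne
    by_contra hcon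
    push_neg at hcon
    apply hne
    have hn₁ : (0 : ℝ) < n₁ := by exact_mod_cast hc₁.1
    have hn₂ : (0 : ℝ) < n₂ := by exact_mod_cast hc₂.1
    ext x
    simp only [MaxPlus.circArcSet, Set.mem_setOf_eq]
    constructor
    · rintro ⟨l, hl, ha, hb⟩
      have h1 : 0 < MaxPlus.pathCoeff n₁ p₁ x.1 x.2 := MaxPlus.pathCoeff_pos hl ha hb
      have hcirc1 : 0 < MaxPlus.circCoeff n₁ p₁ x.1 x.2 := by
        unfold MaxPlus.circCoeff; exact div_pos h1 hn₁
      have hcirc2 : 0 < MaxPlus.circCoeff n₂ p₂ x.1 x.2 := by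
        have := hcon x.1 x.2; linarith
      exact MaxPlus.exists_of_pathCoeff_pos (MaxPlus.pos_of_circ hcirc2)
    · rintro ⟨l, hl, ha, hb⟩
      have h2 : 0 < MaxPlus.pathCoeff n₂ p₂ x.1 x.2 := MaxPlus.pathCoeff_pos hl ha hb
      have hcirc2 : 0 < MaxPlus.circCoeff n₂ p₂ x.1 x.2 := by
        unfold MaxPlus.circCoeff; exact div_pos h2 hn₂
      have hcirc1 : 0 < MaxPlus.circCoeff n₁ p₁ x.1 x.2 := by
        have := hcon x.1 x.2; linarith
      exact MaxPlus.exists_of_pathCoeff_pos (MaxPlus.pos_of_circ hcirc1)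
  · intro i κ n₁ n₂ nc p₁ p₂ pc hik h₁ h₂ hp₁0 hp₂0 hp₁n hp₂n hc hκ key
    have hle1 : ¬ n₂ < n₁ := MaxPlus.e2_aux h₁ hc key
    have hle2 : ¬ n₁ < n₂ :=
      MaxPlus.e2_aux h₂ hc (fun a b => by have := key a b; linarith)
    have hn : n₁ = n₂ := by omega
    refine ⟨hn, ?_⟩
    have hpath : ∀ a b, MaxPlus.pathCoeff n₁ p₁ a b = MaxPlus.pathCoeff n₂ p₂ a b := by
      intro a b
      have := key a b
      have hcast : (n₁ : ℝ) = n₂ := by exact_mod_cast hn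
      linarith [hcast ▸ this]
    intro l
    induction l with
    | zero => intro _; rw [hp₁0, hp₂0]
    | succ l ih =>
      intro hl
      have hll : l < n₁ := by omega
      have hprev : p₁ l = p₂ l := ih (by omega)
      have h1 : 0 < MaxPlus.pathCoeff n₁ p₁ (p₁ l) (p₁ (l + 1)) :=
        MaxPlus.pathCoeff_pos hll rfl rfl
      rw [hpath] at h1
      obtain ⟨m, hm, hma, hmb⟩ := MaxPlus.exists_of_pathCoeff_pos h1
      have hml : m = l := h₂ m l hm.le (by omega) (by rw [hma, ← hprev])
      rw [← hmb, hml]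
end
end

section
/- Let P ∈ M_k be a k×k matrix over ℝ_max with no row all equal to −∞. Then rk(P) = 1 if and only if for every pair (i,j) ∈ {1,…,k}², the difference (P ⊗ x)_i − (P ⊗ x)_j does not depend on x ∈ ℝ^k. -/
open scoped BigOperators
open MeasureTheory

noncomputable section

/-- The map `x ↦ P ⊗ x` from `ℝ^k` to `ℝ^k` defined by a matrix `P ∈ M_k`. -/
def MaxPlus.mpApply {k : ℕ} (P : MPMat k) (x : Fin k → ℝ) (i : Fin k) : ℝ :=
  (Finset.univ.sup fun j => P i j + ((x j : ℝ) : Rmax)).unbotD 0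

section Aux

open MaxPlus

/-- The max-plus application is attained at some index with non-`⊥` entry, and bounds
all other non-`⊥` entries. -/
lemma exists_apply {k : ℕ} {P : MPMat k} (hP : MemMk P) (x : Fin k → ℝ) (i : Fin k) :
    ∃ j, P i j ≠ ⊥ ∧ mpApply P x i = (P i j).unbotD 0 + x j ∧
      ∀ m, P i m ≠ ⊥ → (P i m).unbotD 0 + x m ≤ mpApply P x i := by
  obtain ⟨j, -, hj⟩ := Finset.exists_mem_eq_sup Finset.univ ⟨i, Finset.mem_univ i⟩
      (fun j => P i j + ((x j : ℝ) : Rmax))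
  obtain ⟨j0, hj0⟩ := hP i
  have hSne : (Finset.univ.sup fun j => P i j + ((x j : ℝ) : Rmax)) ≠ ⊥ := by
    intro h
    have hle := Finset.le_sup (s := Finset.univ)
      (f := fun j => P i j + ((x j : ℝ) : Rmax)) (Finset.mem_univ j0)
    rw [h, le_bot_iff, WithBot.add_eq_bot] at hle
    rcases hle with h' | h'
    · exact hj0 h'
    · exact WithBot.coe_ne_bot h'
  have hPij : P i j ≠ ⊥ := by
    intro h; apply hSne; rw [hj, h, WithBot.bot_add]
  obtain ⟨r, hr⟩ := WithBot.ne_bot_iff_exists.mp hPij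
  refine ⟨j, hPij, ?_, ?_⟩
  · unfold mpApply
    rw [hj, ← hr, ← WithBot.coe_add, WithBot.unbotD_coe, WithBot.unbotD_coe]
  · intro m hm
    obtain ⟨q, hq⟩ := WithBot.ne_bot_iff_exists.mp hm
    have hle : P i m + ((x m : ℝ) : Rmax) ≤ P i j + ((x j : ℝ) : Rmax) := by
      rw [← hj]
      exact Finset.le_sup (f := fun j => P i j + ((x j : ℝ) : Rmax)) (Finset.mem_univ m)
    rw [← hq, ← hr, ← WithBot.coe_add, ← WithBot.coe_add, WithBot.coe_le_coe] at hle
    unfold mpApply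
    rw [hj, ← hr, ← hq, ← WithBot.coe_add, WithBot.unbotD_coe, WithBot.unbotD_coe]
    exact hle

end Aux

/-- `P ∈ M_k` has rank one iff for every pair `(i,j)` the difference
`(P ⊗ x)_i - (P ⊗ x)_j` does not depend on `x ∈ ℝ^k`. -/
theorem stmt18 (k : ℕ) (hk : 0 < k) (P : MPMat k) (hP : MaxPlus.MemMk P) :
    MaxPlus.IsRankOne P ↔
      ∀ (i j : Fin k) (x y : Fin k → ℝ),
        MaxPlus.mpApply P x i - MaxPlus.mpApply P x j
          = MaxPlus.mpApply P y i - MaxPlus.mpApply P y j := by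
  classical
  open MaxPlus in
  constructor
  · rintro ⟨a, b, -, -, hab⟩ i j x y
    have ha : ∀ i : Fin k, a i ≠ ⊥ := by
      intro i hbot
      obtain ⟨m, hm⟩ := hP i
      exact hm (by rw [hab, hbot, WithBot.bot_add])
    have key : ∀ (x : Fin k → ℝ) (i j : Fin k),
        mpApply P x i - (a i).unbotD 0 ≤ mpApply P x j - (a j).unbotD 0 := by
      intro x i j
      obtain ⟨m, hm, he, -⟩ := exists_apply hP x i
      obtain ⟨-, -, -, hub⟩ := exists_apply hP x j
      have hbm : b m ≠ ⊥ := fun h => hm (by rw [hab, h, WithBot.add_bot])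
      obtain ⟨α, hα⟩ := WithBot.ne_bot_iff_exists.mp (ha i)
      obtain ⟨α', hα'⟩ := WithBot.ne_bot_iff_exists.mp (ha j)
      obtain ⟨β, hβ⟩ := WithBot.ne_bot_iff_exists.mp hbm
      have hpim : (P i m).unbotD 0 = α + β := by
        rw [hab, ← hα, ← hβ, ← WithBot.coe_add, WithBot.unbotD_coe]
      have hpjm : (P j m).unbotD 0 = α' + β := by
        rw [hab, ← hα', ← hβ, ← WithBot.coe_add, WithBot.unbotD_coe]
      have hPjm : P j m ≠ ⊥ := by
        rw [hab, ← hα', ← hβ, ← WithBot.coe_add]; exact WithBot.coe_ne_bot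
      have h2 := hub m hPjm
      rw [hpim] at he
      rw [hpjm] at h2
      have hai : (a i).unbotD 0 = α := by rw [← hα, WithBot.unbotD_coe]
      have haj : (a j).unbotD 0 = α' := by rw [← hα', WithBot.unbotD_coe]
      rw [hai, haj, he]
      linarith
    have keyeq : ∀ (x : Fin k → ℝ) (i j : Fin k),
        mpApply P x i - (a i).unbotD 0 = mpApply P x j - (a j).unbotD 0 :=
      fun x i j => le_antisymm (key x i j) (key x j i)
    have h1 := keyeq x i j
    have h2 := keyeq y i j
    linarith
  · intro hdiff
    set p : Fin k → Fin k → ℝ := fun i j => (P i j).unbotD 0 with hp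
    set a : Fin k → ℝ := fun i => mpApply P (fun _ => 0) i with ha
    have hd : ∀ (x : Fin k → ℝ) (i j : Fin k),
        mpApply P x i - mpApply P x j = a i - a j := fun x i j => hdiff i j x (fun _ => 0)
    have hne : (Finset.univ : Finset (Fin k × Fin k)).Nonempty :=
      ⟨(⟨0, hk⟩, ⟨0, hk⟩), Finset.mem_univ _⟩
    set C : ℝ := Finset.univ.sup' hne (fun q : Fin k × Fin k => |p q.1 q.2|) with hCdef
    have hC : ∀ i j, |p i j| ≤ C := fun i j =>
      Finset.le_sup' (fun q : Fin k × Fin k => |p q.1 q.2|) (Finset.mem_univ (i, j))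
    have sub : ∀ (t : ℝ), C ≤ t → ∀ (j r : Fin k), P r j ≠ ⊥ →
        mpApply P (fun m => if m = j then t else -t) r = p r j + t := by
      intro t ht j r hrj
      set x : Fin k → ℝ := fun m => if m = j then t else -t with hx
      obtain ⟨m, hm, he, hub⟩ := exists_apply hP x r
      have h1 : p r j + t ≤ mpApply P x r := by
        have := hub j hrj
        simpa [hx] using this
      have h2 : mpApply P x r ≤ p r j + t := by
        rw [he]
        by_cases hmj : m = j
        · subst hmj; simp [hx, hp]
        · have hxm : x m = -t := by simp [hx, hmj]
          rw [hxm]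
          obtain ⟨hm1, hm2⟩ := abs_le.mp (hC r m)
          obtain ⟨hj1, hj2⟩ := abs_le.mp (hC r j)
          show p r m + -t ≤ p r j + t
          linarith
      linarith
    have col : ∀ (j i i' : Fin k), P i' j ≠ ⊥ → P i j ≠ ⊥ := by
      intro j i i' hi' hi
      set t : ℝ := C + |a i' - a i| + 1 with htdef
      have ht : C ≤ t := by
        have := abs_nonneg (a i' - a i); linarith
      set x : Fin k → ℝ := fun m => if m = j then t else -t with hx
      have hi'app : mpApply P x i' = p i' j + t := sub t ht j i' hi'
      obtain ⟨m, hm, he, -⟩ := exists_apply hP x i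
      have hmj : m ≠ j := fun h => hm (h ▸ hi)
      have hxm : x m = -t := by simp [hx, hmj]
      have hdx := hd x i i'
      rw [hi'app, he, hxm] at hdx
      obtain ⟨hm1, hm2⟩ := abs_le.mp (hC i m)
      obtain ⟨hj1, hj2⟩ := abs_le.mp (hC i' j)
      have hneg : -|a i - a i'| ≤ a i - a i' := neg_abs_le _
      have hcomm : |a i - a i'| = |a i' - a i| := abs_sub_comm _ _
      have h0 : (0 : ℝ) ≤ |a i' - a i| := abs_nonneg _
      linarith
    have col2 : ∀ (j i i' : Fin k), P i j ≠ ⊥ → P i' j ≠ ⊥ →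
        p i j - a i = p i' j - a i' := by
      intro j i i' hi hi'
      have h1 := sub C le_rfl j i hi
      have h2 := sub C le_rfl j i' hi'
      have hdx := hd (fun m => if m = j then C else -C) i i'
      rw [h1, h2] at hdx
      linarith
    refine ⟨fun i => ((a i : ℝ) : Rmax),
      fun j => if h : ∃ i, P i j ≠ ⊥ then ((p h.choose j - a h.choose : ℝ) : Rmax) else ⊥,
      ⟨⟨0, hk⟩, WithBot.coe_ne_bot⟩, ?_, ?_⟩
    · obtain ⟨j, hj⟩ := hP ⟨0, hk⟩
      have hex : ∃ i, P i j ≠ ⊥ := ⟨⟨0, hk⟩, hj⟩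
      refine ⟨j, ?_⟩
      simp only [dif_pos hex]
      exact WithBot.coe_ne_bot
    · intro i j
      by_cases h : ∃ i', P i' j ≠ ⊥
      · simp only [dif_pos h]
        have hij : P i j ≠ ⊥ := col j i h.choose h.choose_spec
        obtain ⟨r, hr⟩ := WithBot.ne_bot_iff_exists.mp hij
        have hpij : p i j = r := by rw [hp]; simp only [← hr, WithBot.unbotD_coe]
        have hkey : r = a i + (p h.choose j - a h.choose) := by
          have := col2 j i h.choose hij h.choose_spec
          linarith
        rw [← hr, ← WithBot.coe_add, hkey]
      · simp only [dif_neg h, WithBot.add_bot]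
        by_contra hne'
        exact h ⟨i, hne'⟩
end
end
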